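/- arXiv:2312.14256 — 5 statements merged into one kernel-verified Lean document; each statement's English description precedes it below -/
import Mathlib

section
/- Let F be a voting method whose domain is the set of all profiles with exactly two alternatives. Then the following are equivalent: (1) F satisfies anonymity, neutrality, and weak positive responsiveness; (2) F is majority voting, i.e., for every two-alternative profile P with X(P) = {a,b}, a ∈ F(P) if and only if Margin_P(a,b) ≥ 0. -/
/-!
Formalization of notions from "An extension of May's Theorem to three
alternatives: axiomatizing Minimax voting" by Holliday and Pacuit.

The set of voters is the countably infinite set `ℕ`; the set `α` of
alternatives is a type (assumed to have at least three elements where the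
paper assumes `|𝒳| ≥ 3`).
-/

namespace MayMinimax

/-- A profile: a finite set of voters drawn from the countably infinite set `ℕ`
of all voters, a finite set of alternatives, and, for each voter, a binary
relation on alternatives given as a Boolean-valued function:
`P.rel i a b = true` means that voter `i` ranks `a` above `b`. -/
structure Profile (α : Type*) where
  voters : Finset ℕ
  alts : Finset α
  rel : ℕ → α → α → Bool

variable {α : Type*} [DecidableEq α]

/-- Each voter's ballot is a strict weak order (asymmetric and negatively
transitive) on the alternatives. -/
def IsSWO (P : Profile α) : Prop :=
  ∀ i ∈ P.voters,
    (∀ a ∈ P.alts, ∀ b ∈ P.alts, P.rel i a b = true → P.rel i b a = false) ∧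
    (∀ a ∈ P.alts, ∀ b ∈ P.alts, ∀ c ∈ P.alts,
      P.rel i a b = false → P.rel i b c = false → P.rel i a c = false)

/-- The margin of `a` over `b` in `P`: the number of voters ranking `a` above
`b` minus the number of voters ranking `b` above `a`. -/
def Margin (P : Profile α) (a b : α) : ℤ :=
  ((P.voters.filter fun i => P.rel i a b = true).card : ℤ) -
    ((P.voters.filter fun i => P.rel i b a = true).card : ℤ)

/-- The number of voters ranking `a` above `b` in `P`. -/
def Support (P : Profile α) (a b : α) : ℕ :=
  (P.voters.filter fun i => P.rel i a b = true).card

/-- The Minimax score of `a`: the maximum margin of any other alternative over `a`. -/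
def MMScore (P : Profile α) (a : α) : ℤ :=
  WithBot.unbotD 0 (((P.alts.erase a).image fun b => Margin P b a).max)

/-- The set of Minimax winners: alternatives with minimal Minimax score. -/
def Minimax (P : Profile α) : Finset α :=
  P.alts.filter fun a => ∀ b ∈ P.alts, MMScore P a ≤ MMScore P b

/-- Restriction of a profile to a subset `Y` of the alternatives. -/
def Profile.restrict (P : Profile α) (Y : Finset α) : Profile α where
  voters := P.voters
  alts := Y
  rel := fun i a b => P.rel i a b && decide (a ∈ Y) && decide (b ∈ Y)

/-- `P.minus b` is `P` restricted to `X(P) \ {b}`. -/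
def Profile.minus (P : Profile α) (b : α) : Profile α :=
  P.restrict (P.alts.erase b)

/-- The combination `P + Q` of two profiles (used with disjoint voter sets and
the same set of alternatives). -/
def Profile.combine (P Q : Profile α) : Profile α where
  voters := P.voters ∪ Q.voters
  alts := P.alts
  rel := fun i a b => if i ∈ P.voters then P.rel i a b else Q.rel i a b

/-- `2P`: the profile `P` together with a copy of `P` on a disjoint set of voters. -/
def Profile.double (P : Profile α) : Profile α where
  voters := P.voters ∪ P.voters.image fun i => i + (P.voters.sup id + 1)
  alts := P.alts
  rel := fun i a b =>
    if i ∈ P.voters then P.rel i a b else P.rel (i - (P.voters.sup id + 1)) a b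

/-- `r` is (the strict part of) a linear order on the finite set `X`. -/
def IsLinearOn (r : α → α → Bool) (X : Finset α) : Prop :=
  (∀ a ∈ X, r a a = false) ∧
  (∀ a ∈ X, ∀ b ∈ X, ∀ c ∈ X, r a b = true → r b c = true → r a c = true) ∧
  (∀ a ∈ X, ∀ b ∈ X, a ≠ b → (r a b = true ∨ r b a = true)) ∧
  (∀ a ∈ X, ∀ b ∈ X, r a b = true → r b a = false)

/-- `Q` is a block profile for the set `X` of alternatives: it contains, for
each linear order of `X`, exactly one voter submitting that linear order, and
no other voters. -/
def IsBlock (X : Finset α) (Q : Profile α) : Prop :=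
  Q.alts = X ∧
  (∀ i ∈ Q.voters, IsLinearOn (Q.rel i) X) ∧
  (∀ r : α → α → Bool, IsLinearOn r X →
    ∃! i, i ∈ Q.voters ∧ ∀ a ∈ X, ∀ b ∈ X, Q.rel i a b = r a b)

/-- `P'` is obtained from `P` by one voter who ranked `a` uniquely last in `P`
switching to ranking `a` uniquely first in `P'`, with the restriction of that
voter's relation to `X(P) \ {a}` unchanged and all other voters' relations
unchanged. -/
def MoveLastToFirst (P P' : Profile α) (a : α) : Prop :=
  P'.voters = P.voters ∧ P'.alts = P.alts ∧ a ∈ P.alts ∧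
  ∃ i ∈ P.voters,
    (∀ b ∈ P.alts, b ≠ a → P.rel i b a = true) ∧
    (∀ b ∈ P.alts, b ≠ a → P'.rel i a b = true) ∧
    (∀ b ∈ P.alts, b ≠ a → ∀ c ∈ P.alts, c ≠ a → P'.rel i b c = P.rel i b c) ∧
    (∀ j ∈ P.voters, j ≠ i → ∀ x ∈ P.alts, ∀ y ∈ P.alts, P'.rel j x y = P.rel j x y)

/-- `P'` is obtained from `P` by adding one new voter who ranks `a` uniquely
first, all old voters' relations being unchanged. -/
def AddTopVoter (P P' : Profile α) (a : α) : Prop :=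
  P'.alts = P.alts ∧
  ∃ j, j ∉ P.voters ∧ P'.voters = insert j P.voters ∧
    (∀ b ∈ P.alts, b ≠ a → P'.rel j a b = true) ∧
    (∀ i ∈ P.voters, ∀ x ∈ P.alts, ∀ y ∈ P.alts, P'.rel i x y = P.rel i x y)

/-- `P'` is obtained from `P` by one voter improving the position of `a` in
their ballot, while nothing else changes. -/
def ImproveFor (P P' : Profile α) (a : α) : Prop :=
  P'.voters = P.voters ∧ P'.alts = P.alts ∧
  ∃ i ∈ P.voters,
    (∃ b ∈ P.alts, b ≠ a ∧
      ((P.rel i a b = false ∧ P'.rel i a b = true) ∨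
        (P.rel i b a = true ∧ P'.rel i b a = false))) ∧
    (∀ c ∈ P.alts, c ≠ a →
      (P.rel i a c = true → P'.rel i a c = true) ∧
      (P.rel i c a = false → P'.rel i c a = false)) ∧
    (∀ c ∈ P.alts, c ≠ a → ∀ d ∈ P.alts, d ≠ a → P'.rel i c d = P.rel i c d) ∧
    (∀ j ∈ P.voters, j ≠ i → ∀ x ∈ P.alts, ∀ y ∈ P.alts, P'.rel j x y = P.rel j x y)

/-- Anonymity relative to a domain `D` of profiles. -/
def Anonymity (D : Set (Profile α)) (F : Profile α → Finset α) : Prop :=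
  ∀ P ∈ D, ∀ P' ∈ D, P.alts = P'.alts →
    (∃ π : Equiv.Perm ℕ, P.voters.image π = P'.voters ∧
      ∀ i ∈ P.voters, ∀ a ∈ P.alts, ∀ b ∈ P.alts, P.rel i a b = P'.rel (π i) a b) →
    F P = F P'

/-- Neutrality relative to a domain `D` of profiles. -/
def Neutrality (D : Set (Profile α)) (F : Profile α → Finset α) : Prop :=
  ∀ P ∈ D, ∀ P' ∈ D, P.voters = P'.voters →
    ∀ τ : Equiv.Perm α, P.alts.image τ = P'.alts →
      (∀ i ∈ P.voters, ∀ a ∈ P.alts, ∀ b ∈ P.alts, P.rel i a b = P'.rel i (τ a) (τ b)) →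
      (F P).image τ = F P'

/-- Weak positive responsiveness relative to a domain `D` of profiles. -/
def WeakPositiveResponsiveness (D : Set (Profile α)) (F : Profile α → Finset α) : Prop :=
  ∀ P ∈ D, ∀ P' ∈ D, ∀ a ∈ F P, MoveLastToFirst P P' a → F P' = {a}

/-- (Full) positive responsiveness relative to a domain `D` of profiles. -/
def PositiveResponsiveness (D : Set (Profile α)) (F : Profile α → Finset α) : Prop :=
  ∀ P ∈ D, ∀ P' ∈ D, ∀ a ∈ F P, ImproveFor P P' a → F P' = {a}

/-- Positive involvement relative to a domain `D` of profiles. -/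
def PositiveInvolvement (D : Set (Profile α)) (F : Profile α → Finset α) : Prop :=
  ∀ P ∈ D, ∀ P' ∈ D, ∀ a ∈ F P, AddTopVoter P P' a → a ∈ F P'

/-- Near immunity to spoilers relative to a domain `D` of profiles. -/
def NearImmunityToSpoilers (D : Set (Profile α)) (F : Profile α → Finset α) : Prop :=
  ∀ P ∈ D, ∀ a ∈ P.alts, ∀ b ∈ P.alts,
    P.minus b ∈ D → P.restrict {a, b} ∈ D →
    F (P.minus b) = {a} → F (P.restrict {a, b}) = {a} → b ∉ F P → a ∈ F P

/-- Immunity to spoilers relative to a domain `D` of profiles. -/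
def ImmunityToSpoilers (D : Set (Profile α)) (F : Profile α → Finset α) : Prop :=
  ∀ P ∈ D, ∀ a ∈ P.alts, ∀ b ∈ P.alts,
    P.minus b ∈ D → P.restrict {a, b} ∈ D →
    a ∈ F (P.minus b) → F (P.restrict {a, b}) = {a} → b ∉ F P → a ∈ F P

/-- (Inclusion) homogeneity relative to a domain `D` of profiles. -/
def Homogeneity (D : Set (Profile α)) (F : Profile α → Finset α) : Prop :=
  ∀ P ∈ D, P.double ∈ D ∧ F P ⊆ F P.double

/-- Block preservation relative to a domain `D` of profiles. -/
def BlockPreservation (D : Set (Profile α)) (F : Profile α → Finset α) : Prop :=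
  ∀ P ∈ D, ∀ Q ∈ D, Disjoint P.voters Q.voters → IsBlock P.alts Q →
    P.combine Q ∈ D ∧ F P ⊆ F (P.combine Q)

/-- Condorcet consistency relative to a domain `D` of profiles. -/
def CondorcetConsistent (D : Set (Profile α)) (F : Profile α → Finset α) : Prop :=
  ∀ P ∈ D, ∀ c ∈ P.alts, (∀ x ∈ P.alts, x ≠ c → 0 < Margin P c x) → F P = {c}

/-- The domain of all (strict-weak-order) profiles with exactly two alternatives. -/
def Dom2 (α : Type*) : Set (Profile α) :=
  {P | IsSWO P ∧ P.voters.Nonempty ∧ P.alts.card = 2}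

/-- The domain of all profiles with two or three alternatives. -/
def Dom23 (α : Type*) : Set (Profile α) :=
  {P | IsSWO P ∧ P.voters.Nonempty ∧ (P.alts.card = 2 ∨ P.alts.card = 3)}

/-- The domain of all profiles with at least two alternatives. -/
def DomGe2 (α : Type*) : Set (Profile α) :=
  {P | IsSWO P ∧ P.voters.Nonempty ∧ 2 ≤ P.alts.card}

/-- The domain of all profiles. -/
def DomAll (α : Type*) : Set (Profile α) :=
  {P | IsSWO P ∧ P.voters.Nonempty ∧ P.alts.Nonempty}

/-- The support-based Minimax score of `a`: the maximum of `Support P b a`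
over all `b` with a positive margin over `a` (`0` if there is no such `b`). -/
def SupportMMScore (P : Profile α) (a : α) : ℕ :=
  WithBot.unbotD 0 ((((P.alts.erase a).filter fun b => 0 < Margin P b a).image fun b =>
    Support P b a).max)

/-- Support-based Minimax: alternatives with minimal support-based Minimax score. -/
def SupportMinimax (P : Profile α) : Finset α :=
  P.alts.filter fun a => ∀ b ∈ P.alts, SupportMMScore P a ≤ SupportMMScore P b

/-- The set of weak Condorcet winners in `P`. -/
def WeakCondorcetWinners (P : Profile α) : Finset α :=
  P.alts.filter fun a => ∀ x ∈ P.alts, 0 ≤ Margin P a x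

/-- The plurality score of `a`: the number of voters ranking `a` uniquely first. -/
def PluralityScore (P : Profile α) (a : α) : ℕ :=
  (P.voters.filter fun i => ∀ b ∈ P.alts, b ≠ a → P.rel i a b = true).card

/-- The Condorcet-Plurality voting method: the weak Condorcet winners if there
are any; otherwise the alternatives with maximal plurality score. -/
def CP (P : Profile α) : Finset α :=
  if (WeakCondorcetWinners P).Nonempty then WeakCondorcetWinners P
  else P.alts.filter fun a => ∀ b ∈ P.alts, PluralityScore P b ≤ PluralityScore P a

/-- The marginal Borda score of `a`: the sum of the margins of `a` over the
alternatives. -/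
def MarginalBorda (P : Profile α) (a : α) : ℤ :=
  ∑ b ∈ P.alts, Margin P a b

/-- Minimax MB: the Minimax winners with greatest marginal Borda score. -/
def MinimaxMB (P : Profile α) : Finset α :=
  (Minimax P).filter fun a => ∀ b ∈ Minimax P, MarginalBorda P b ≤ MarginalBorda P a

/-- `P` and `P'` have the same ordinal margin graph. -/
def SameOrdinalMarginGraph (P P' : Profile α) : Prop :=
  P.alts = P'.alts ∧
  (∀ a ∈ P.alts, ∀ b ∈ P.alts, (0 < Margin P a b ↔ 0 < Margin P' a b)) ∧
  (∀ a ∈ P.alts, ∀ b ∈ P.alts, ∀ c ∈ P.alts, ∀ d ∈ P.alts,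
    (Margin P c d ≤ Margin P a b ↔ Margin P' c d ≤ Margin P' a b))

/-- Ordinal margin invariance relative to a domain `D` of profiles. -/
def OrdinalMarginInvariance (D : Set (Profile α)) (F : Profile α → Finset α) : Prop :=
  ∀ P ∈ D, ∀ P' ∈ D, SameOrdinalMarginGraph P P' → F P = F P'

/-- `P` is uniquely-weighted: distinct pairs of distinct alternatives have
distinct margins. -/
def UniquelyWeighted (P : Profile α) : Prop :=
  ∀ a ∈ P.alts, ∀ b ∈ P.alts, ∀ c ∈ P.alts, ∀ d ∈ P.alts,
    a ≠ b → c ≠ d → (a, b) ≠ (c, d) → Margin P a b ≠ Margin P c d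

end MayMinimax

/-!
On two alternatives, anonymity and neutrality make a tie a two-way tie: exchanging `a` and `b`
in every ballot yields, up to a permutation of the voters, the same profile. A profile with
margin `m > 0` arises from one with margin `m - 2` by a single voter moving `a` from last to
first, so weak positive responsiveness carries the win of `a` up from margin `0`. Margin `1`
comes from margin `-1`: there either `a` wins, or `b` wins alone, and then by neutrality `a` wins
alone in the mirrored profile, which is the original one up to voters.

Conversely, majority voting is the weak Condorcet winner rule on two alternatives, and this rule
depends on margins only, while a last-to-first move raises the margins of `a` by `2`.
-/

namespace MayMinimax

open Finset

variable {α : Type*}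

theorem exists_perm_of_card_fiber_eq {ι β : Type*} [DecidableEq ι] [DecidableEq β]
    (V : Finset ι) (f g : ι → β) (h : ∀ c, #{i ∈ V | f i = c} = #{i ∈ V | g i = c}) :
    ∃ π : Equiv.Perm ι, V.image π = V ∧ ∀ i ∈ V, g (π i) = f i := by
  have hcard (k : ι → β) (c : β) : Fintype.card {x : V // k x = c} = #{i ∈ V | k i = c} := by
    rw [Fintype.card_subtype, univ_eq_attach, filter_attach (k · = c), card_map, card_attach]
  let σ : Equiv.Perm V := Equiv.ofFiberEquiv fun c =>
    Fintype.equivOfCardEq ((hcard f c).trans ((h c).trans (hcard g c).symm))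
  have hσ (i : ι) (hi : i ∈ V) : Equiv.Perm.ofSubtype σ i = σ ⟨i, hi⟩ :=
    Equiv.Perm.ofSubtype_apply_of_mem σ hi
  refine ⟨Equiv.Perm.ofSubtype σ, ?_, fun i hi => ?_⟩
  · refine eq_of_subset_of_card_le (fun j hj => ?_)
      (card_image_of_injective _ (Equiv.injective _)).ge
    obtain ⟨i, hi, rfl⟩ := mem_image.mp hj
    exact hσ i hi ▸ coe_mem _
  · rw [hσ i hi]
    exact Equiv.ofFiberEquiv_map (f := fun x : V => f x) (g := fun x : V => g x) _ (⟨i, hi⟩ : V)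

section Margins

variable {P Q : Profile α} {i : ℕ} {a b x y : α}

theorem margin_eq_support_sub (P : Profile α) (a b : α) :
    Margin P a b = Support P a b - Support P b a := rfl

theorem margin_self (P : Profile α) (a : α) : Margin P a a = 0 := sub_self _

theorem neg_margin (P : Profile α) (a b : α) : -Margin P a b = Margin P b a := neg_sub _ _

theorem IsSWO.asymm (hP : IsSWO P) (hi : i ∈ P.voters) (ha : a ∈ P.alts) (hb : b ∈ P.alts)
    (hab : P.rel i a b = true) : P.rel i b a = false :=
  (hP i hi).1 a ha b hb hab

theorem IsSWO.irrefl (hP : IsSWO P) (hi : i ∈ P.voters) (ha : a ∈ P.alts) :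
    P.rel i a a = false := by
  cases h : P.rel i a a
  · rfl
  · simpa [h] using hP.asymm hi ha ha h

theorem support_eq_add_one (hv : Q.voters = P.voters) (hi : i ∈ P.voters)
    (hothers : ∀ j ∈ P.voters, j ≠ i → Q.rel j x y = P.rel j x y)
    (hP : P.rel i x y = false) (hQ : Q.rel i x y = true) :
    Support Q x y = Support P x y + 1 := by
  have hfilter : {j ∈ Q.voters | Q.rel j x y = true} =
      insert i {j ∈ P.voters | P.rel j x y = true} := by
    ext j
    by_cases hji : j = i
    · subst hji; simp [hv, hi, hQ]
    · simp +contextual [hv, hji, hothers]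
  rw [Support, Support, hfilter, card_insert_of_notMem (by simp [hP])]

theorem support_eq_of_voter_perm (π : Equiv.Perm ℕ) (hv : P.voters.image π = Q.voters)
    (hrel : ∀ i ∈ P.voters, P.rel i x y = Q.rel (π i) x y) : Support Q x y = Support P x y := by
  rw [Support, Support, ← hv, filter_image, card_image_of_injective _ π.injective]
  exact congrArg card (filter_congr fun i hi => by rw [hrel i hi])

theorem support_eq_of_alt_map (τ : α → α) (hv : P.voters = Q.voters)
    (hrel : ∀ i ∈ P.voters, P.rel i x y = Q.rel i (τ x) (τ y)) :
    Support Q (τ x) (τ y) = Support P x y := by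
  rw [Support, Support, ← hv]
  exact congrArg card (filter_congr fun i hi => by rw [hrel i hi])

theorem margin_of_moveLastToFirst {c : α} (hP : IsSWO P) (hQ : IsSWO Q)
    (h : MoveLastToFirst P Q a) (hc : c ∈ P.alts) (hca : c ≠ a) :
    Margin Q a c = Margin P a c + 2 := by
  obtain ⟨hv, halts, ha, i, hi, hlast, hfirst, -, hothers⟩ := h
  have hi' : i ∈ Q.voters := hv ▸ hi
  have hgain : Support Q a c = Support P a c + 1 :=
    support_eq_add_one hv hi (fun j hj hji => hothers j hj hji a ha c hc)
      (hP.asymm hi hc ha (hlast c hc hca)) (hfirst c hc hca)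
  have hloss : Support P c a = Support Q c a + 1 :=
    support_eq_add_one hv.symm hi' (fun j hj hji => (hothers j (hv ▸ hj) hji c hc a ha).symm)
      (hQ.asymm hi' (halts ▸ ha) (halts ▸ hc) (hfirst c hc hca)) (hlast c hc hca)
  rw [margin_eq_support_sub, margin_eq_support_sub, hgain, hloss]
  push_cast
  ring

theorem card_filter_ballot_eq (hP : IsSWO P) (ha : a ∈ P.alts) (hb : b ∈ P.alts)
    (c : Bool × Bool) :
    #{i ∈ P.voters | (P.rel i a b, P.rel i b a) = c} =
      match c with
      | (true, true) => 0
      | (true, false) => Support P a b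
      | (false, true) => Support P b a
      | (false, false) => #P.voters - Support P a b - Support P b a := by
  have hasymm : ∀ i ∈ P.voters, P.rel i a b = true → P.rel i b a = false :=
    fun i hi => hP.asymm hi ha hb
  obtain ⟨_ | _, _ | _⟩ := c
  · have hsplit := card_filter_add_card_filter_not
      (s := P.voters) (fun i => P.rel i a b = true ∨ P.rel i b a = true)
    rw [filter_or, card_union_of_disjoint (disjoint_filter.mpr fun i hi h h' => by
      simp [hasymm i hi h] at h')] at hsplit
    have hindiff : {i ∈ P.voters | (P.rel i a b, P.rel i b a) = (false, false)} =
        {i ∈ P.voters | ¬(P.rel i a b = true ∨ P.rel i b a = true)} :=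
      filter_congr fun i _ => by simp
    rw [hindiff]
    dsimp only [Support]
    omega
  · exact congrArg card (filter_congr fun i hi => by
      cases h : P.rel i a b <;> simp [h, hasymm i hi])
  · exact congrArg card (filter_congr fun i hi => by
      cases h : P.rel i a b <;> simp [h, hasymm i hi])
  · exact card_eq_zero.mpr (filter_eq_empty_iff.mpr fun i hi => by
      cases h : P.rel i a b <;> simp [h, hasymm i hi])

end Margins

section Constructions

variable [DecidableEq α] {P : Profile α} {a b : α}

def Profile.relabel (P : Profile α) (τ : Equiv.Perm α) : Profile α where
  voters := P.voters
  alts := P.alts.image τ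
  rel i x y := P.rel i (τ.symm x) (τ.symm y)

def Profile.setBallot (P : Profile α) (i : ℕ) (r : α → α → Bool) : Profile α where
  voters := P.voters
  alts := P.alts
  rel := Function.update P.rel i r

def pairBallot (b a : α) : α → α → Bool := fun x y => decide (x = b ∧ y = a)

theorem support_relabel (P : Profile α) (τ : Equiv.Perm α) (x y : α) :
    Support (P.relabel τ) x y = Support P (τ.symm x) (τ.symm y) := rfl

theorem IsSWO.relabel (hP : IsSWO P) (τ : Equiv.Perm α) : IsSWO (P.relabel τ) := by
  intro i hi
  simpa only [Profile.relabel, forall_mem_image, Equiv.symm_apply_apply] using hP i hi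

theorem relabel_mem_dom2 (hP : P ∈ Dom2 α) (τ : Equiv.Perm α) : P.relabel τ ∈ Dom2 α :=
  ⟨hP.1.relabel τ, hP.2.1, (card_image_of_injective _ τ.injective).trans hP.2.2⟩

theorem relabel_swap_alts (halts : P.alts = {a, b}) :
    (P.relabel (Equiv.swap a b)).alts = {a, b} := by
  simp [Profile.relabel, halts, pair_comm]

theorem ne_of_mem_dom2 (hP : P ∈ Dom2 α) (halts : P.alts = {a, b}) : a ≠ b := by
  rintro rfl
  simpa [halts] using hP.2.2

theorem IsSWO.setBallot_pairBallot (hP : IsSWO P) (halts : P.alts = {a, b}) (hab : a ≠ b)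
    (i : ℕ) : IsSWO (P.setBallot i (pairBallot b a)) := by
  intro j hj
  by_cases hji : j = i
  · subst hji
    simp only [Profile.setBallot, Function.update_self, pairBallot, halts, mem_insert,
      mem_singleton]
    grind
  · simpa [Profile.setBallot, Function.update_of_ne hji] using hP j hj

theorem exists_moveLastToFirst (hP : P ∈ Dom2 α) (halts : P.alts = {a, b})
    (hpos : 0 < Support P a b) :
    ∃ Q ∈ Dom2 α, MoveLastToFirst Q P a ∧ Support Q a b + 1 = Support P a b ∧
      Support Q b a = Support P b a + 1 := by
  have hab := ne_of_mem_dom2 hP halts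
  obtain ⟨i, hi⟩ := card_pos.mp hpos
  obtain ⟨hiV, hiab⟩ := mem_filter.mp hi
  have ha : a ∈ P.alts := by simp [halts]
  have hb : b ∈ P.alts := by simp [halts]
  have hother : ∀ c ∈ P.alts, c ≠ a → c = b := by simp +contextual [halts]
  set Q := P.setBallot i (pairBallot b a)
  have hQi : Q.rel i = pairBallot b a := Function.update_self ..
  have hQj : ∀ j ≠ i, Q.rel j = P.rel j := fun j h => Function.update_of_ne h ..
  have hagree : ∀ j ∈ P.voters, j ≠ i → ∀ x y, Q.rel j x y = P.rel j x y :=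
    fun j _ hji x y => by rw [hQj j hji]
  refine ⟨Q, ⟨hP.1.setBallot_pairBallot halts hab i, hP.2.1, hP.2.2⟩,
    ⟨rfl, rfl, ha, i, hiV, ?_, ?_, ?_, fun j hj hji x _ y _ => (hagree j hj hji x y).symm⟩,
    (support_eq_add_one (P := Q) (Q := P) rfl hiV (fun j hj hji => (hagree j hj hji a b).symm)
      (by simp [hQi, pairBallot, hab]) hiab).symm,
    support_eq_add_one rfl hiV (fun j hj hji => hagree j hj hji b a)
      (hP.1.asymm hiV ha hb hiab) (by simp [hQi, pairBallot])⟩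
  · intro c hc hca
    simp [hother c hc hca, hQi, pairBallot]
  · intro c hc hca
    rwa [hother c hc hca]
  · intro c hc hca d hd hda
    simp [hother c hc hca, hother d hd hda, hQi, pairBallot, hab.symm, hP.1.irrefl hiV hb]

end Constructions

section Axioms

variable {D : Set (Profile α)} {F G : Profile α → Finset α} {P Q : Profile α} {a b : α}

theorem Anonymity.congr (hG : Anonymity D G) (h : Set.EqOn F G D) : Anonymity D F :=
  fun P hP P' hP' halts hπ => by rw [h hP, h hP']; exact hG P hP P' hP' halts hπ

theorem Neutrality.congr [DecidableEq α] (hG : Neutrality D G) (h : Set.EqOn F G D) :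
    Neutrality D F :=
  fun P hP P' hP' hv τ halts hrel => by rw [h hP, h hP']; exact hG P hP P' hP' hv τ halts hrel

theorem WeakPositiveResponsiveness.congr (hG : WeakPositiveResponsiveness D G)
    (h : Set.EqOn F G D) : WeakPositiveResponsiveness D F :=
  fun P hP P' hP' a ha hmove => by rw [h hP']; exact hG P hP P' hP' a (h hP ▸ ha) hmove

theorem Neutrality.image_eq_relabel [DecidableEq α] (hN : Neutrality D F) (hP : P ∈ D)
    {τ : Equiv.Perm α} (hτ : P.relabel τ ∈ D) : (F P).image τ = F (P.relabel τ) :=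
  hN P hP _ hτ rfl τ rfl fun i _ x _ y _ => by simp [Profile.relabel]

theorem Anonymity.eq_of_support_eq [DecidableEq α] (hA : Anonymity D F) (hP : P ∈ D)
    (hQ : Q ∈ D) (hPs : IsSWO P) (hQs : IsSWO Q) (hv : P.voters = Q.voters)
    (hPa : P.alts = {a, b}) (hQa : Q.alts = {a, b}) (hab : Support P a b = Support Q a b)
    (hba : Support P b a = Support Q b a) : F P = F Q := by
  have ha : a ∈ P.alts := by simp [hPa]
  have hb : b ∈ P.alts := by simp [hPa]
  have hcount (c : Bool × Bool) : #{i ∈ P.voters | (P.rel i a b, P.rel i b a) = c} =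
      #{i ∈ P.voters | (Q.rel i a b, Q.rel i b a) = c} := by
    rw [card_filter_ballot_eq hPs ha hb, hv, card_filter_ballot_eq hQs (by simp [hQa])
      (by simp [hQa]), hab, hba]
  obtain ⟨π, hπV, hπ⟩ := exists_perm_of_card_fiber_eq P.voters _ _ hcount
  refine hA P hP Q hQ (hPa.trans hQa.symm) ⟨π, hπV.trans hv, fun i hi x hx y hy => ?_⟩
  have hπi : π i ∈ Q.voters := by rw [← hv, ← hπV]; exact mem_image_of_mem π hi
  have ha' : a ∈ Q.alts := by simp [hQa]
  have hb' : b ∈ Q.alts := by simp [hQa]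
  obtain ⟨h1, h2⟩ := Prod.mk.inj (hπ i hi)
  rw [hPa, mem_insert, mem_singleton] at hx hy
  rcases hx with rfl | rfl <;> rcases hy with rfl | rfl
  · rw [hPs.irrefl hi ha, hQs.irrefl hπi ha']
  · exact h1.symm
  · exact h2.symm
  · rw [hPs.irrefl hi hb, hQs.irrefl hπi hb']

end Axioms

section WeakCondorcetWinners

theorem weakCondorcetWinners_anonymity (D : Set (Profile α)) :
    Anonymity D WeakCondorcetWinners := by
  rintro P - P' - halts ⟨π, hv, hrel⟩
  have hmargin : ∀ x ∈ P.alts, ∀ y ∈ P.alts, Margin P' x y = Margin P x y :=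
    fun x hx y hy => by
      rw [margin_eq_support_sub, margin_eq_support_sub,
        support_eq_of_voter_perm π hv fun i hi => hrel i hi x hx y hy,
        support_eq_of_voter_perm π hv fun i hi => hrel i hi y hy x hx]
  rw [WeakCondorcetWinners, WeakCondorcetWinners, ← halts]
  exact filter_congr fun x hx => forall₂_congr fun y hy => by rw [hmargin x hx y hy]

theorem weakCondorcetWinners_neutrality [DecidableEq α] (D : Set (Profile α)) :
    Neutrality D WeakCondorcetWinners := by
  rintro P - P' - hv τ halts hrel
  have hmargin : ∀ x ∈ P.alts, ∀ y ∈ P.alts, Margin P' (τ x) (τ y) = Margin P x y :=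
    fun x hx y hy => by
      rw [margin_eq_support_sub, margin_eq_support_sub,
        support_eq_of_alt_map τ hv fun i hi => hrel i hi x hx y hy,
        support_eq_of_alt_map τ hv fun i hi => hrel i hi y hy x hx]
  rw [WeakCondorcetWinners, WeakCondorcetWinners, ← halts, filter_image]
  refine congrArg _ (filter_congr fun x hx => ?_)
  rw [forall_mem_image]
  exact forall₂_congr fun y hy => by rw [hmargin x hx y hy]

theorem weakCondorcetWinners_weakPositiveResponsiveness {D : Set (Profile α)}
    (hD : ∀ P ∈ D, IsSWO P) : WeakPositiveResponsiveness D WeakCondorcetWinners := by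
  intro P hP P' hP' a ha hmove
  have hgain {c : α} := margin_of_moveLastToFirst (c := c) (hD P hP) (hD P' hP') hmove
  obtain ⟨-, halts, haP, -⟩ := hmove
  have hawins : ∀ c ∈ P.alts, 0 ≤ Margin P a c := (mem_filter.mp ha).2
  rw [eq_singleton_iff_unique_mem, WeakCondorcetWinners, mem_filter, halts]
  refine ⟨⟨haP, fun c hc => ?_⟩, fun c hc => ?_⟩
  · rcases eq_or_ne c a with rfl | hca
    · rw [margin_self]
    · rw [hgain hc hca]
      linarith [hawins c hc]
  · obtain ⟨hc, hcwins⟩ := mem_filter.mp hc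
    by_contra hca
    have hac := hawins c hc
    have hca' := hcwins a haP
    rw [← neg_margin, hgain hc hca] at hca'
    omega

end WeakCondorcetWinners

section May

variable [DecidableEq α] {F : Profile α → Finset α} {P : Profile α} {a b : α}

theorem eq_singleton_of_notMem (hF : ∀ P ∈ Dom2 α, (F P).Nonempty ∧ F P ⊆ P.alts)
    (hP : P ∈ Dom2 α) (halts : P.alts = {a, b}) (ha : a ∉ F P) : F P = {b} := by
  have honly : ∀ x ∈ F P, x = b := fun x hx => by
    have := (hF P hP).2 hx
    rw [halts, mem_insert, mem_singleton] at this
    exact this.resolve_left (by rintro rfl; exact ha hx)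
  obtain ⟨x, hx⟩ := (hF P hP).1
  exact eq_singleton_iff_unique_mem.mpr ⟨honly x hx ▸ hx, honly⟩

theorem mem_of_margin_eq_zero (hF : ∀ P ∈ Dom2 α, (F P).Nonempty ∧ F P ⊆ P.alts)
    (hA : Anonymity (Dom2 α) F) (hN : Neutrality (Dom2 α) F) (hP : P ∈ Dom2 α)
    (halts : P.alts = {a, b}) (hm : Margin P a b = 0) : a ∈ F P := by
  set τ := Equiv.swap a b
  have hPτ := relabel_mem_dom2 hP τ
  rw [margin_eq_support_sub] at hm
  have hsymm : (F P).image τ = F P := by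
    rw [hN.image_eq_relabel hP hPτ]
    refine (hA.eq_of_support_eq hP hPτ hP.1 hPτ.1 rfl halts (relabel_swap_alts halts) ?_ ?_).symm
    all_goals
      simp only [support_relabel, τ, Equiv.symm_swap, Equiv.swap_apply_left,
        Equiv.swap_apply_right]
      omega
  obtain ⟨x, hx⟩ := (hF P hP).1
  have hx' := (hF P hP).2 hx
  rw [halts, mem_insert, mem_singleton] at hx'
  rcases hx' with rfl | rfl
  · exact hx
  · rw [← hsymm, ← Equiv.swap_apply_right a x]
    exact mem_image_of_mem τ hx

theorem eq_singleton_of_margin_eq_one (hF : ∀ P ∈ Dom2 α, (F P).Nonempty ∧ F P ⊆ P.alts)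
    (hA : Anonymity (Dom2 α) F) (hN : Neutrality (Dom2 α) F)
    (hW : WeakPositiveResponsiveness (Dom2 α) F) (hP : P ∈ Dom2 α) (halts : P.alts = {a, b})
    (hm : Margin P a b = 1) : F P = {a} := by
  rw [margin_eq_support_sub] at hm
  obtain ⟨Q, hQ, hmove, hQab, hQba⟩ := exists_moveLastToFirst hP halts (by omega)
  by_cases haQ : a ∈ F Q
  · exact hW Q hQ P hP a haQ hmove
  have hQalts : Q.alts = {a, b} := hmove.2.1.symm.trans halts
  set τ := Equiv.swap a b
  have hQτ := relabel_mem_dom2 hQ τ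
  have hFQτ : F (Q.relabel τ) = {a} := by
    rw [← hN.image_eq_relabel hQ hQτ, eq_singleton_of_notMem hF hQ hQalts haQ, image_singleton,
      Equiv.swap_apply_right]
  rw [← hFQτ]
  refine hA.eq_of_support_eq hP hQτ hP.1 hQτ.1 hmove.1 halts (relabel_swap_alts hQalts)
    ?_ ?_
  all_goals
    simp only [support_relabel, τ, Equiv.symm_swap, Equiv.swap_apply_left,
      Equiv.swap_apply_right]
    omega

theorem eq_singleton_of_margin_pos (hF : ∀ P ∈ Dom2 α, (F P).Nonempty ∧ F P ⊆ P.alts)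
    (hA : Anonymity (Dom2 α) F) (hN : Neutrality (Dom2 α) F)
    (hW : WeakPositiveResponsiveness (Dom2 α) F) (hP : P ∈ Dom2 α) (halts : P.alts = {a, b})
    (hm : 0 < Margin P a b) : F P = {a} := by
  obtain ⟨n, hn⟩ : ∃ n : ℕ, Margin P a b = n + 1 := ⟨(Margin P a b - 1).toNat, by omega⟩
  clear hm
  induction n using Nat.strong_induction_on generalizing P with
  | _ n ih =>
  rcases n with _ | n
  · exact eq_singleton_of_margin_eq_one hF hA hN hW hP halts hn
  rw [margin_eq_support_sub] at hn
  obtain ⟨Q, hQ, hmove, hQab, hQba⟩ := exists_moveLastToFirst hP halts (by omega)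
  have hQalts : Q.alts = {a, b} := hmove.2.1.symm.trans halts
  have hQm : Margin Q a b = n := by rw [margin_eq_support_sub]; omega
  have haQ : a ∈ F Q := by
    rcases n with _ | n
    · exact mem_of_margin_eq_zero hF hA hN hQ hQalts hQm
    · rw [ih n (by omega) hQ hQalts hQm]
      exact mem_singleton_self a
  exact hW Q hQ P hP a haQ hmove

theorem mem_iff_margin_nonneg (hF : ∀ P ∈ Dom2 α, (F P).Nonempty ∧ F P ⊆ P.alts)
    (hA : Anonymity (Dom2 α) F) (hN : Neutrality (Dom2 α) F)
    (hW : WeakPositiveResponsiveness (Dom2 α) F) (hP : P ∈ Dom2 α) (halts : P.alts = {a, b}) :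
    a ∈ F P ↔ 0 ≤ Margin P a b := by
  refine ⟨fun ha => ?_, fun hm => ?_⟩
  · by_contra! hneg
    have hba := eq_singleton_of_margin_pos hF hA hN hW hP (halts.trans (pair_comm a b))
      (by rw [← neg_margin]; omega)
    rw [hba, mem_singleton] at ha
    exact ne_of_mem_dom2 hP halts ha
  · rcases hm.eq_or_lt with hm | hm
    · exact mem_of_margin_eq_zero hF hA hN hP halts hm.symm
    · rw [eq_singleton_of_margin_pos hF hA hN hW hP halts hm]
      exact mem_singleton_self a

theorem eq_weakCondorcetWinners (hF : ∀ P ∈ Dom2 α, (F P).Nonempty ∧ F P ⊆ P.alts)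
    (hmaj : ∀ P ∈ Dom2 α, ∀ a b : α, P.alts = {a, b} → (a ∈ F P ↔ 0 ≤ Margin P a b))
    (hP : P ∈ Dom2 α) : F P = WeakCondorcetWinners P := by
  obtain ⟨a, b, -, halts⟩ := card_eq_two.mp hP.2.2
  ext x
  by_cases hx : x ∈ P.alts
  · obtain ⟨y, hxy⟩ : ∃ y, P.alts = {x, y} := by
      rw [halts, mem_insert, mem_singleton] at hx
      rcases hx with rfl | rfl
      · exact ⟨b, halts⟩
      · exact ⟨a, halts.trans (pair_comm a x)⟩
    rw [hmaj P hP x y hxy, WeakCondorcetWinners, mem_filter, hxy]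
    simp [margin_self]
  · exact iff_of_false (fun h => hx ((hF P hP).2 h)) (fun h => hx (mem_filter.mp h).1)

end May

theorem mays_theorem_general {α : Type*} [DecidableEq α]
    (F : Profile α → Finset α)
    (hF : ∀ P ∈ Dom2 α, (F P).Nonempty ∧ F P ⊆ P.alts) :
    (Anonymity (Dom2 α) F ∧ Neutrality (Dom2 α) F ∧
        WeakPositiveResponsiveness (Dom2 α) F) ↔
      (∀ P ∈ Dom2 α, ∀ a b : α, P.alts = {a, b} →
        (a ∈ F P ↔ 0 ≤ Margin P a b)) := by
  refine ⟨fun ⟨hA, hN, hW⟩ P hP a b halts => mem_iff_margin_nonneg hF hA hN hW hP halts,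
    fun hmaj => ?_⟩
  have hF_eq : Set.EqOn F WeakCondorcetWinners (Dom2 α) :=
    fun P hP => eq_weakCondorcetWinners hF hmaj hP
  exact ⟨(weakCondorcetWinners_anonymity _).congr hF_eq,
    (weakCondorcetWinners_neutrality _).congr hF_eq,
    (weakCondorcetWinners_weakPositiveResponsiveness fun P hP => hP.1).congr hF_eq⟩

/-- **May's Theorem.** A voting method on the domain of two-alternative
profiles satisfies anonymity, neutrality, and weak positive responsiveness
iff it is majority voting. -/
theorem mays_theorem {α : Type*} [DecidableEq α]
    (hX : ∃ x y z : α, x ≠ y ∧ x ≠ z ∧ y ≠ z)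
    (F : Profile α → Finset α)
    (hF : ∀ P ∈ Dom2 α, (F P).Nonempty ∧ F P ⊆ P.alts) :
    (Anonymity (Dom2 α) F ∧ Neutrality (Dom2 α) F ∧
        WeakPositiveResponsiveness (Dom2 α) F) ↔
      (∀ P ∈ Dom2 α, ∀ a b : α, P.alts = {a, b} →
        (a ∈ F P ↔ 0 ≤ Margin P a b)) :=
  mays_theorem_general F hF

end MayMinimax
end

section
/- The Minimax voting method, defined on all profiles with at least two alternatives, satisfies positive involvement: if a ∈ Minimax(P) and P' is obtained from P by adding one new voter (a voter not in V(P)) who ranks a uniquely first, then a ∈ Minimax(P'). -/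
/-!
Formalization of notions from "An extension of May's Theorem to three
alternatives: axiomatizing Minimax voting" by Holliday and Pacuit.

The set of voters is the countably infinite set `ℕ`; the set `α` of
alternatives is a type (assumed to have at least three elements where the
paper assumes `|𝒳| ≥ 3`).
-/

namespace MayMinimax

variable {α : Type*} [DecidableEq α]

/-!
Adding a voter who ranks `a` uniquely first lowers every margin over `a` by one, so the Minimax
score of `a` drops by at least one, while no margin, and hence no Minimax score, drops by more
than one. A minimal score therefore stays minimal.
-/

section AddVoter

variable {α : Type*} {P P' : Profile α} {j : ℕ} {x y : α}

theorem support_of_insert_voter (hj : j ∉ P.voters) (hv : P'.voters = insert j P.voters)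
    (hrel : ∀ i ∈ P.voters, P'.rel i x y = P.rel i x y) :
    (Support P' x y : ℤ) = Support P x y + if P'.rel j x y = true then 1 else 0 := by
  have hold : P.voters.filter (fun i => P'.rel i x y = true)
      = P.voters.filter (fun i => P.rel i x y = true) :=
    Finset.filter_congr fun i hi => by rw [hrel i hi]
  unfold Support
  rw [hv, Finset.filter_insert, hold]
  split_ifs with h
  · rw [Finset.card_insert_of_notMem fun hm => hj (Finset.mem_of_mem_filter _ hm)]
    push_cast
    rfl
  · simp

theorem margin_of_insert_voter (hj : j ∉ P.voters) (hv : P'.voters = insert j P.voters)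
    (hrel : ∀ i ∈ P.voters, ∀ x ∈ P.alts, ∀ y ∈ P.alts, P'.rel i x y = P.rel i x y)
    (hx : x ∈ P.alts) (hy : y ∈ P.alts) :
    Margin P' x y = Margin P x y +
      ((if P'.rel j x y = true then 1 else 0) - if P'.rel j y x = true then 1 else 0) := by
  have hxy := support_of_insert_voter hj hv fun i hi => hrel i hi x hx y hy
  have hyx := support_of_insert_voter hj hv fun i hi => hrel i hi y hy x hx
  simp only [Margin, Support] at hxy hyx ⊢
  rw [hxy, hyx]
  ring

theorem margin_le_margin_of_insert_voter_add_one (hj : j ∉ P.voters)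
    (hv : P'.voters = insert j P.voters)
    (hrel : ∀ i ∈ P.voters, ∀ x ∈ P.alts, ∀ y ∈ P.alts, P'.rel i x y = P.rel i x y)
    (hx : x ∈ P.alts) (hy : y ∈ P.alts) :
    Margin P x y ≤ Margin P' x y + 1 := by
  rw [margin_of_insert_voter hj hv hrel hx hy]
  split_ifs <;> omega

theorem margin_of_insert_voter_of_rel (hj : j ∉ P.voters) (hv : P'.voters = insert j P.voters)
    (hrel : ∀ i ∈ P.voters, ∀ x ∈ P.alts, ∀ y ∈ P.alts, P'.rel i x y = P.rel i x y)
    (hx : x ∈ P.alts) (hy : y ∈ P.alts) (hyx : P'.rel j y x = true)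
    (hxy : P'.rel j x y = false) :
    Margin P' x y = Margin P x y - 1 := by
  rw [margin_of_insert_voter hj hv hrel hx hy, hyx, hxy]
  norm_num
  ring

end AddVoter

section MMScore

variable {Q Q' : Profile α} {x : α}

theorem margin_le_mmScore {b : α} (hb : b ∈ Q.alts) (hbx : b ≠ x) :
    Margin Q b x ≤ MMScore Q x := by
  have hmem : Margin Q b x ∈ (Q.alts.erase x).image fun c => Margin Q c x :=
    Finset.mem_image_of_mem _ (Finset.mem_erase.2 ⟨hbx, hb⟩)
  obtain ⟨m, hm⟩ := Finset.max_of_mem hmem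
  simpa only [MMScore, hm, WithBot.unbotD_coe] using Finset.le_max_of_eq hmem hm

theorem exists_mmScore_eq_margin (hne : (Q.alts.erase x).Nonempty) :
    ∃ b ∈ Q.alts.erase x, MMScore Q x = Margin Q b x := by
  have hne' : ((Q.alts.erase x).image fun b => Margin Q b x).Nonempty := hne.image _
  obtain ⟨b, hb, hbm⟩ := Finset.mem_image.1 (Finset.max'_mem _ hne')
  refine ⟨b, hb, ?_⟩
  rw [hbm, MMScore, ← Finset.coe_max' hne']
  rfl

theorem mmScore_le_add_of_margin_le (k : ℤ) (hne : (Q'.alts.erase x).Nonempty)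
    (hsub : Q'.alts ⊆ Q.alts) (hm : ∀ b ∈ Q'.alts, b ≠ x → Margin Q' b x ≤ Margin Q b x + k) :
    MMScore Q' x ≤ MMScore Q x + k := by
  obtain ⟨b, hb, hbx⟩ := exists_mmScore_eq_margin hne
  obtain ⟨hbx', hb'⟩ := Finset.mem_erase.1 hb
  rw [hbx]
  linarith [hm b hb' hbx', margin_le_mmScore (hsub hb') hbx']

end MMScore

theorem minimax_positive_involvement_general {α : Type*} [DecidableEq α] :
    PositiveInvolvement (DomGe2 α) Minimax := by
  intro P hP P' hP' a ha ⟨halts, j, hj, hv, htop, hrel⟩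
  obtain ⟨haX, hamin⟩ := Finset.mem_filter.1 ha
  have hne : ∀ x ∈ P.alts, (P.alts.erase x).Nonempty := fun x hx =>
    (Finset.erase_nonempty hx).2 (Finset.one_lt_card_iff_nontrivial.1 hP.2.2)
  have hjP' : j ∈ P'.voters := hv ▸ Finset.mem_insert_self j P.voters
  have hscore_a : MMScore P' a ≤ MMScore P a + -1 :=
    mmScore_le_add_of_margin_le _ (halts ▸ hne a haX) halts.subset fun b hb hba => by
      rw [halts] at hb
      have htop_b := htop b hb hba
      have hasymm := (hP'.1 j hjP').1 a (halts ▸ haX) b (halts ▸ hb) htop_b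
      rw [margin_of_insert_voter_of_rel hj hv hrel hb haX htop_b hasymm]
      omega
  have hscore : ∀ b ∈ P.alts, MMScore P b ≤ MMScore P' b + 1 := fun b hb =>
    mmScore_le_add_of_margin_le 1 (hne b hb) halts.symm.subset fun c hc _ =>
      margin_le_margin_of_insert_voter_add_one hj hv hrel hc hb
  refine Finset.mem_filter.2 ⟨halts ▸ haX, fun b hb => ?_⟩
  rw [halts] at hb
  linarith [hamin b hb, hscore b hb]

/-- Minimax, on the domain of all profiles with at least two alternatives,
satisfies positive involvement. -/
theorem minimax_positive_involvement {α : Type*} [DecidableEq α]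
    (hX : ∃ x y z : α, x ≠ y ∧ x ≠ z ∧ y ≠ z) :
    PositiveInvolvement (DomGe2 α) Minimax :=
  minimax_positive_involvement_general

end MayMinimax
end

section
/- Let F be a voting method whose domain is the set of all profiles with two or three alternatives. If F satisfies anonymity, neutrality, weak positive responsiveness, positive involvement, Condorcet consistency, homogeneity, and block preservation, then F refines Minimax: F(P) ⊆ Minimax(P) for every profile P in the domain of F. -/
/-!
Formalization of notions from "An extension of May's Theorem to three
alternatives: axiomatizing Minimax voting" by Holliday and Pacuit.

The set of voters is the countably infinite set `ℕ`; the set `α` of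
alternatives is a type (assumed to have at least three elements where the
paper assumes `|𝒳| ≥ 3`).
-/

namespace MayMinimax

variable {α : Type*} [DecidableEq α]

/-!
Let `w ∈ F P` and let `x` have the largest margin over `w`. If `w` is not a Minimax winner,
this margin is positive, and one of two arguments applies.

If `Margin x w + Margin x f > 0` for every other `f`, double `P` and add
`2 · Margin x w - 1` voters ranking `w > x > ⋯`: by homogeneity and positive involvement `w`
is still chosen, yet `x` has become a Condorcet winner.

Otherwise some `z` has `Margin z x ≥ Margin x w`, and as `w` is not a Minimax winner,
`Margin x w + Margin z w > 0`. Scale `P` by 8 and append blocks, which keeps `w` chosen and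
leaves the margins unchanged. In one block, move `w` from last to first for the voter
`x > z > w`; by weak positive responsiveness `w` becomes the unique winner. Now delete,
one at a time, a voter `z > w > x` from each of the other blocks. Neither `x` (by the first
argument, with `z` in the role of `x`) nor `z` (re-adding the voter, who ranks `z` first,
would make `z` win the previous profile) can ever win, so `w` stays the unique winner; but
at the end the first argument applies to `w` and `x`.
-/

open Profile

section VoterOperations

omit [DecidableEq α]

def contrib (r : α → α → Bool) (a c : α) : ℤ :=
  (if r a c then 1 else 0) - (if r c a then 1 else 0)

theorem margin_eq_sum (P : Profile α) (a c : α) :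
    Margin P a c = ∑ i ∈ P.voters, contrib (P.rel i) a c := by
  simp only [Margin, contrib, Finset.card_filter, Finset.sum_sub_distrib]
  push_cast
  rfl

theorem margin_swap (P : Profile α) (a c : α) : Margin P a c = -Margin P c a := by
  simp only [Margin]
  ring

namespace Profile

def addVoters (P : Profile α) (T : Finset ℕ) (r : α → α → Bool) : Profile α where
  voters := P.voters ∪ T
  alts := P.alts
  rel i := if i ∈ T then r else P.rel i

def eraseVoters (P : Profile α) (U : Finset ℕ) : Profile α where
  voters := P.voters \ U
  alts := P.alts
  rel := P.rel

def setBallot_s7 (P : Profile α) (j : ℕ) (r : α → α → Bool) : Profile α where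
  voters := P.voters
  alts := P.alts
  rel i := if i = j then r else P.rel i

@[simp]
theorem addVoters_empty (P : Profile α) (r : α → α → Bool) : P.addVoters ∅ r = P := by
  cases P
  simp [addVoters]

@[simp]
theorem eraseVoters_empty (P : Profile α) : P.eraseVoters ∅ = P := by
  cases P
  simp [eraseVoters]

end Profile

theorem margin_combine (P Q : Profile α) (h : Disjoint P.voters Q.voters) (a c : α) :
    Margin (P.combine Q) a c = Margin P a c + Margin Q a c := by
  simp only [margin_eq_sum, combine]
  rw [Finset.sum_union h]
  congr 1 <;> refine Finset.sum_congr rfl fun i hi => ?_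
  · simp [hi]
  · simp [Finset.disjoint_right.mp h hi]

theorem margin_double (P : Profile α) (a c : α) :
    Margin P.double a c = 2 * Margin P a c := by
  set k := P.voters.sup id + 1
  have hlt : ∀ i ∈ P.voters, i < k := fun i hi => Nat.lt_succ_of_le (Finset.le_sup (f := id) hi)
  have hdisj : Disjoint P.voters (P.voters.image (· + k)) := by
    refine Finset.disjoint_right.mpr fun i hi hiP => ?_
    obtain ⟨j, -, rfl⟩ := Finset.mem_image.mp hi
    exact absurd (hlt _ hiP) (by omega)
  simp only [margin_eq_sum, double]
  rw [Finset.sum_union hdisj, Finset.sum_image fun _ _ _ _ h => by simpa using h, two_mul]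
  congr 1 <;> refine Finset.sum_congr rfl fun i hi => ?_
  · simp [hi]
  · have : i + k ∉ P.voters := fun h => absurd (hlt _ h) (by omega)
    simp [k, this]

theorem margin_addVoters (P : Profile α) {T : Finset ℕ} (hT : Disjoint P.voters T)
    (r : α → α → Bool) (a c : α) :
    Margin (P.addVoters T r) a c = Margin P a c + T.card * contrib r a c := by
  simp only [margin_eq_sum, addVoters]
  rw [Finset.sum_union hT]
  congr 1
  · refine Finset.sum_congr rfl fun i hi => ?_
    simp [Finset.disjoint_left.mp hT hi]
  · simp +contextual

theorem margin_eraseVoters (P : Profile α) {U : Finset ℕ} (hU : U ⊆ P.voters)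
    {r : α → α → Bool} (hr : ∀ i ∈ U, P.rel i = r) (a c : α) :
    Margin (P.eraseVoters U) a c = Margin P a c - U.card * contrib r a c := by
  simp only [margin_eq_sum, eraseVoters]
  rw [← Finset.sum_sdiff hU, Finset.sum_congr (rfl : U = U) fun i hi => by rw [hr i hi],
    Finset.sum_const, nsmul_eq_mul]
  ring

theorem margin_setBallot (P : Profile α) {j : ℕ} (hj : j ∈ P.voters)
    (r : α → α → Bool) (a c : α) :
    Margin (P.setBallot_s7 j r) a c = Margin P a c - contrib (P.rel j) a c + contrib r a c := by
  simp only [margin_eq_sum, setBallot_s7]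
  rw [← Finset.add_sum_erase _ _ hj, ← Finset.add_sum_erase _ _ hj]
  have : ∑ i ∈ P.voters.erase j, contrib (if i = j then r else P.rel i) a c =
      ∑ i ∈ P.voters.erase j, contrib (P.rel i) a c :=
    Finset.sum_congr rfl fun i hi => by simp [Finset.ne_of_mem_erase hi]
  simp only [if_pos, this]
  ring

def IsStrictWeakOrderOn (r : α → α → Bool) (X : Finset α) : Prop :=
  (∀ a ∈ X, ∀ b ∈ X, r a b = true → r b a = false) ∧
  (∀ a ∈ X, ∀ b ∈ X, ∀ c ∈ X, r a b = false → r b c = false → r a c = false)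

def scoreBallot (g : α → ℕ) : α → α → Bool := fun u v => decide (g v < g u)

theorem isStrictWeakOrderOn_scoreBallot (g : α → ℕ) (X : Finset α) :
    IsStrictWeakOrderOn (scoreBallot g) X := by
  constructor
  · intro a _ b _ h
    simp only [scoreBallot, decide_eq_true_eq, decide_eq_false_iff_not, not_lt] at h ⊢
    exact h.le
  · intro a _ b _ c _ h₁ h₂
    simp only [scoreBallot, decide_eq_false_iff_not, not_lt] at h₁ h₂ ⊢
    exact h₁.trans h₂

theorem isLinearOn_scoreBallot {g : α → ℕ} {X : Finset α} (hg : Set.InjOn g X) :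
    IsLinearOn (scoreBallot g) X := by
  refine ⟨fun a _ => by simp [scoreBallot], fun a _ b _ c _ h₁ h₂ => ?_,
    fun a ha b hb hab => ?_, fun a _ b _ h => ?_⟩
  · simp only [scoreBallot, decide_eq_true_eq] at h₁ h₂ ⊢
    exact h₂.trans h₁
  · simp only [scoreBallot, decide_eq_true_eq]
    exact lt_or_gt_of_ne fun h => hab (hg hb ha h).symm
  · simp only [scoreBallot, decide_eq_true_eq, decide_eq_false_iff_not, not_lt] at h ⊢
    exact h.le

theorem IsLinearOn.swap {r : α → α → Bool} {X : Finset α} (hr : IsLinearOn r X)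
    {a c : α} (ha : a ∈ X) (hc : c ∈ X) (hac : a ≠ c) : r c a = !r a c := by
  rcases hr.2.2.1 a ha c hc hac with h | h
  · rw [h, hr.2.2.2 a ha c hc h]; rfl
  · rw [h, hr.2.2.2 c hc a ha h]; rfl

theorem addVoters_mem_Dom23 {P : Profile α} (hP : P ∈ Dom23 α) (T : Finset ℕ)
    {r : α → α → Bool} (hr : IsStrictWeakOrderOn r P.alts) : P.addVoters T r ∈ Dom23 α := by
  refine ⟨fun i _ => (?_ : IsStrictWeakOrderOn _ _), hP.2.1.mono Finset.subset_union_left, hP.2.2⟩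
  by_cases hi : i ∈ T
  · simpa [addVoters, hi] using hr
  · simp only [addVoters, if_neg hi]
    exact hP.1 i (by simp_all [addVoters])

theorem eraseVoters_mem_Dom23 {P : Profile α} (hP : P ∈ Dom23 α) {U : Finset ℕ}
    (hne : (P.voters \ U).Nonempty) : P.eraseVoters U ∈ Dom23 α :=
  ⟨fun i hi => hP.1 i (Finset.sdiff_subset hi), hne, hP.2.2⟩

theorem setBallot_mem_Dom23 {P : Profile α} (hP : P ∈ Dom23 α) (j : ℕ)
    {r : α → α → Bool} (hr : IsStrictWeakOrderOn r P.alts) : P.setBallot_s7 j r ∈ Dom23 α := by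
  refine ⟨fun i hi => (?_ : IsStrictWeakOrderOn _ _), hP.2.1, hP.2.2⟩
  by_cases hij : i = j
  · simpa [setBallot_s7, hij] using hr
  · simp only [setBallot_s7, if_neg hij]
    exact hP.1 i hi

variable {F : Profile α → Finset α}

theorem mem_F_addVoters (pinv : PositiveInvolvement (Dom23 α) F) {P : Profile α}
    (hP : P ∈ Dom23 α) {r : α → α → Bool} (hr : IsStrictWeakOrderOn r P.alts) {d : α}
    (htop : ∀ c ∈ P.alts, c ≠ d → r d c = true) (hd : d ∈ F P) {T : Finset ℕ}
    (hT : Disjoint P.voters T) : d ∈ F (P.addVoters T r) := by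
  induction T using Finset.induction_on with
  | empty => simpa using hd
  | @insert v T hvT ih =>
    have hvP : v ∉ P.voters := Finset.disjoint_right.mp hT (Finset.mem_insert_self v T)
    refine pinv _ (addVoters_mem_Dom23 hP T hr) _ (addVoters_mem_Dom23 hP _ hr) d
      (ih (Finset.disjoint_insert_right.mp hT).2) ⟨rfl, v, ?_, Finset.union_insert v _ _, ?_, ?_⟩
    · simp [addVoters, hvP, hvT]
    · intro c hc hcd
      simpa [addVoters] using htop c hc hcd
    · intro i hi x _ y _
      have hiv : i ≠ v := by rintro rfl; simp_all [addVoters]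
      simp [addVoters, hiv]

end VoterOperations

def topTwo (a b : α) : α → α → Bool :=
  scoreBallot fun u => if u = a then 2 else if u = b then 1 else 0

theorem topTwo_isLinearOn {a b c : α} (hab : a ≠ b) (hac : a ≠ c) (hbc : b ≠ c)
    {X : Finset α} (hX : ∀ w ∈ X, w = a ∨ w = b ∨ w = c) : IsLinearOn (topTwo a b) X := by
  refine isLinearOn_scoreBallot fun u hu v hv huv => ?_
  rcases hX u hu with rfl | rfl | rfl <;> rcases hX v hv with rfl | rfl | rfl <;>
    simp_all [eq_comm]

section VotingMethod

variable {F : Profile α → Finset α}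

theorem F_eraseVoters_eq_singleton (hF : ∀ P ∈ Dom23 α, (F P).Nonempty ∧ F P ⊆ P.alts)
    (pinv : PositiveInvolvement (Dom23 α) F) {N : Profile α} {S : Finset ℕ} {b z : α}
    (hbz : b ≠ z) (hS : S ⊆ N.voters) (htop : ∀ i ∈ S, ∀ c ∈ N.alts, c ≠ z → N.rel i z c = true)
    (hdom : ∀ U ⊆ S, N.eraseVoters U ∈ Dom23 α) (hwin : ∀ U ⊆ S, F (N.eraseVoters U) ⊆ {b, z})
    (hN : F N = {b}) {U : Finset ℕ} (hU : U ⊆ S) : F (N.eraseVoters U) = {b} := by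
  induction U using Finset.induction_on with
  | empty => simpa using hN
  | @insert v U hvU ih =>
    have hUS : U ⊆ S := (Finset.subset_insert v U).trans hU
    have hvS : v ∈ S := hU (Finset.mem_insert_self v U)
    have hvU' : v ∈ N.voters \ U := Finset.mem_sdiff.mpr ⟨hS hvS, hvU⟩
    have hsub : insert v U ⊆ S := hU
    refine (hF _ (hdom _ hsub)).1.subset_singleton_iff.mp fun w hw => ?_
    rcases Finset.mem_insert.mp (hwin _ hsub hw) with rfl | hwz
    · exact Finset.mem_singleton_self w
    rw [Finset.mem_singleton] at hwz
    subst hwz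
    have hadd : AddTopVoter (N.eraseVoters (insert v U)) (N.eraseVoters U) w := by
      refine ⟨rfl, v, by simp [eraseVoters], ?_, fun c hc hcw => htop v hvS c hc hcw,
        fun _ _ _ _ _ _ => rfl⟩
      simp only [eraseVoters, Finset.sdiff_insert, Finset.insert_erase hvU']
    have := pinv _ (hdom _ hsub) _ (hdom U hUS) w hw hadd
    rw [ih hUS, Finset.mem_singleton] at this
    exact absurd this.symm hbz

theorem not_mem_of_margin_pos_of_add_pos (pinv : PositiveInvolvement (Dom23 α) F)
    (cc : CondorcetConsistent (Dom23 α) F) (hom : Homogeneity (Dom23 α) F) {V : Profile α}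
    (hV : V ∈ Dom23 α) {d e : α} (hde : d ≠ e) (he : e ∈ V.alts) (hed : 0 < Margin V e d)
    (hf : ∀ f ∈ V.alts, f ≠ d → f ≠ e → 0 < Margin V e d + Margin V e f) : d ∉ F V := by
  intro hd
  obtain ⟨hV2, hsub⟩ := hom V hV
  set m := V.double.voters.sup id + 1
  set u := (2 * Margin V e d - 1).toNat
  have hu : (u : ℤ) = 2 * Margin V e d - 1 := Int.toNat_of_nonneg (by omega)
  have hdisj : Disjoint V.double.voters (Finset.Ico m (m + u)) :=
    Finset.disjoint_right.mpr fun i hi hiV =>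
      absurd (Finset.le_sup (f := id) hiV) (by simp only [Finset.mem_Ico] at hi; simp; omega)
  set A := V.double.addVoters (Finset.Ico m (m + u)) (topTwo d e)
  have hdA : d ∈ F A := mem_F_addVoters pinv hV2 (isStrictWeakOrderOn_scoreBallot _ _)
    (fun c _ hcd => by simp [scoreBallot, hcd]; split_ifs <;> simp) (hsub hd) hdisj
  have hmargin : ∀ c, Margin A e c = 2 * Margin V e c + u * contrib (topTwo d e) e c :=
    fun c => by simp [A, margin_addVoters _ hdisj, margin_double]
  have hA : F A = {e} := by
    refine cc A (addVoters_mem_Dom23 hV2 _ (isStrictWeakOrderOn_scoreBallot _ _)) e he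
      fun c hc hce => ?_
    rw [hmargin]
    rcases eq_or_ne c d with rfl | hcd
    · simp [contrib, topTwo, scoreBallot, hde.symm, hu]
    · have := hf c hc hcd hce
      simp [contrib, topTwo, scoreBallot, hcd, hce, hde.symm, hu]
      omega
  exact hde (Finset.mem_singleton.mp (hA ▸ hdA))

end VotingMethod

/-- On `{b, x, z}` these are its six linear orders. -/
def blockBallot (b x z : α) : ℕ → α → α → Bool
  | 0 => topTwo b x
  | 1 => topTwo b z
  | 2 => topTwo x b
  | 3 => topTwo x z
  | 4 => topTwo z b
  | _ => topTwo z x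

def blockProfile (b x z : α) (n : ℕ) : Profile α where
  voters := Finset.Ico n (n + 6)
  alts := {b, x, z}
  rel i := blockBallot b x z (i - n)

theorem isStrictWeakOrderOn_blockBallot (b x z : α) (s : ℕ) (X : Finset α) :
    IsStrictWeakOrderOn (blockBallot b x z s) X := by
  unfold blockBallot
  split <;> exact isStrictWeakOrderOn_scoreBallot _ _

section Block

variable {b x z : α} (hbx : b ≠ x) (hbz : b ≠ z) (hxz : x ≠ z)
include hbx hbz hxz

theorem isLinearOn_blockBallot (s : ℕ) : IsLinearOn (blockBallot b x z s) {b, x, z} := by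
  have h : ∀ w ∈ ({b, x, z} : Finset α), w = b ∨ w = x ∨ w = z := by simp
  match s with
  | 0 => exact topTwo_isLinearOn hbx hbz hxz h
  | 1 => exact topTwo_isLinearOn hbz hbx hxz.symm fun w hw => by have := h w hw; tauto
  | 2 => exact topTwo_isLinearOn hbx.symm hxz hbz fun w hw => by have := h w hw; tauto
  | 3 => exact topTwo_isLinearOn hxz hbx.symm hbz.symm fun w hw => by have := h w hw; tauto
  | 4 => exact topTwo_isLinearOn hbz.symm hxz.symm hbx fun w hw => by have := h w hw; tauto
  | _ + 5 => exact topTwo_isLinearOn hxz.symm hbz.symm hbx.symm fun w hw => by have := h w hw; tauto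

theorem IsLinearOn.eqOn_of_agree {r r' : α → α → Bool} (hr : IsLinearOn r {b, x, z})
    (hr' : IsLinearOn r' {b, x, z}) (h₁ : r b x = r' b x) (h₂ : r b z = r' b z)
    (h₃ : r x z = r' x z) : ∀ a ∈ ({b, x, z} : Finset α), ∀ c ∈ ({b, x, z} : Finset α),
      r a c = r' a c := by
  have hb : b ∈ ({b, x, z} : Finset α) := by simp
  have hx : x ∈ ({b, x, z} : Finset α) := by simp
  have hz : z ∈ ({b, x, z} : Finset α) := by simp
  intro a ha c hc
  simp only [Finset.mem_insert, Finset.mem_singleton] at ha hc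
  rcases ha with rfl | rfl | rfl <;> rcases hc with rfl | rfl | rfl <;>
    first
    | rw [hr.1 _ ‹_›, hr'.1 _ ‹_›]
    | assumption
    | rw [hr.swap hb hx hbx, hr'.swap hb hx hbx, h₁]
    | rw [hr.swap hb hz hbz, hr'.swap hb hz hbz, h₂]
    | rw [hr.swap hx hz hxz, hr'.swap hx hz hxz, h₃]

theorem exists_blockBallot_eq {r : α → α → Bool} (hr : IsLinearOn r {b, x, z}) :
    ∃ s < 6, ∀ a ∈ ({b, x, z} : Finset α), ∀ c ∈ ({b, x, z} : Finset α),
      blockBallot b x z s a c = r a c := by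
  have hne : b ≠ x ∧ b ≠ z ∧ x ≠ z ∧ x ≠ b ∧ z ≠ b ∧ z ≠ x :=
    ⟨hbx, hbz, hxz, hbx.symm, hbz.symm, hxz.symm⟩
  have hb : b ∈ ({b, x, z} : Finset α) := by simp
  have hx : x ∈ ({b, x, z} : Finset α) := by simp
  have hz : z ∈ ({b, x, z} : Finset α) := by simp
  have key : ∀ s < 6, (blockBallot b x z s b x, blockBallot b x z s b z, blockBallot b x z s x z) =
      (r b x, r b z, r x z) → ∃ s < 6, ∀ a ∈ ({b, x, z} : Finset α),
        ∀ c ∈ ({b, x, z} : Finset α), blockBallot b x z s a c = r a c := by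
    intro s hs h
    simp only [Prod.mk.injEq] at h
    exact ⟨s, hs, (isLinearOn_blockBallot hbx hbz hxz s).eqOn_of_agree hbx hbz hxz hr
      h.1 h.2.1 h.2.2⟩
  have hxb : r x b = !r b x := hr.swap hb hx hbx
  cases h₁ : r b x <;> cases h₂ : r b z <;> cases h₃ : r x z <;>
    simp only [h₁, Bool.not_false, Bool.not_true] at hxb
  · exact key 5 (by norm_num) (by simp [blockBallot, topTwo, scoreBallot, hne, h₁, h₂, h₃])
  · exact key 3 (by norm_num) (by simp [blockBallot, topTwo, scoreBallot, hne, h₁, h₂, h₃])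
  · simpa [h₃] using hr.2.1 x hx b hb z hz hxb h₂
  · exact key 2 (by norm_num) (by simp [blockBallot, topTwo, scoreBallot, hne, h₁, h₂, h₃])
  · exact key 4 (by norm_num) (by simp [blockBallot, topTwo, scoreBallot, hne, h₁, h₂, h₃])
  · simpa [h₂] using hr.2.1 b hb x hx z hz h₁ h₃
  · exact key 1 (by norm_num) (by simp [blockBallot, topTwo, scoreBallot, hne, h₁, h₂, h₃])
  · exact key 0 (by norm_num) (by simp [blockBallot, topTwo, scoreBallot, hne, h₁, h₂, h₃])

theorem blockBallot_injOn {s s' : ℕ} (hs : s < 6) (hs' : s' < 6)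
    (h : ∀ a ∈ ({b, x, z} : Finset α), ∀ c ∈ ({b, x, z} : Finset α),
      blockBallot b x z s a c = blockBallot b x z s' a c) : s = s' := by
  have hne : b ≠ x ∧ b ≠ z ∧ x ≠ z ∧ x ≠ b ∧ z ≠ b ∧ z ≠ x :=
    ⟨hbx, hbz, hxz, hbx.symm, hbz.symm, hxz.symm⟩
  have h₁ := h b (by simp) x (by simp)
  have h₂ := h b (by simp) z (by simp)
  have h₃ := h x (by simp) z (by simp)
  interval_cases s <;> interval_cases s' <;>
    simp_all [blockBallot, topTwo, scoreBallot]

theorem margin_blockProfile (n : ℕ) {a c : α} (ha : a ∈ ({b, x, z} : Finset α))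
    (hc : c ∈ ({b, x, z} : Finset α)) : Margin (blockProfile b x z n) a c = 0 := by
  have hne : b ≠ x ∧ b ≠ z ∧ x ≠ z ∧ x ≠ b ∧ z ≠ b ∧ z ≠ x :=
    ⟨hbx, hbz, hxz, hbx.symm, hbz.symm, hxz.symm⟩
  rw [margin_eq_sum]
  simp only [blockProfile, Finset.sum_Ico_eq_sum_range, add_tsub_cancel_left,
    Finset.sum_range_succ, Finset.sum_range_zero]
  simp only [Finset.mem_insert, Finset.mem_singleton] at ha hc
  rcases ha with rfl | rfl | rfl <;> rcases hc with rfl | rfl | rfl <;>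
    simp [blockBallot, contrib, topTwo, scoreBallot, hne]

theorem blockProfile_mem_Dom23 (n : ℕ) : blockProfile b x z n ∈ Dom23 α := by
  refine ⟨fun i _ => isStrictWeakOrderOn_blockBallot b x z _ _,
    ⟨n, by simp [blockProfile]⟩, Or.inr ?_⟩
  simp [blockProfile, hbx, hbz, hxz]

theorem isBlock_blockProfile (n : ℕ) : IsBlock {b, x, z} (blockProfile b x z n) := by
  refine ⟨rfl, fun i _ => isLinearOn_blockBallot hbx hbz hxz _, fun r hr => ?_⟩
  obtain ⟨s, hs, hsr⟩ := exists_blockBallot_eq hbx hbz hxz hr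
  refine ⟨n + s, ⟨by simp [blockProfile, hs], by simpa [blockProfile] using hsr⟩, ?_⟩
  rintro i ⟨hi, hir⟩
  simp only [blockProfile, Finset.mem_Ico] at hi hir
  have : i - n = s := blockBallot_injOn hbx hbz hxz (by omega) hs
    fun a ha c hc => (hir a ha c hc).trans (hsr a ha c hc).symm
  omega

end Block

def addBlocks (P : Profile α) (b x z : α) (m : ℕ) : ℕ → Profile α
  | 0 => P
  | k + 1 => (addBlocks P b x z m k).combine (blockProfile b x z (m + 6 * k))

section AddBlocks

variable {P : Profile α} {b x z : α} {m : ℕ}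

theorem addBlocks_alts (k : ℕ) : (addBlocks P b x z m k).alts = P.alts := by
  induction k with
  | zero => rfl
  | succ k ih => exact ih

theorem addBlocks_voters (k : ℕ) :
    (addBlocks P b x z m k).voters = P.voters ∪ Finset.Ico m (m + 6 * k) := by
  induction k with
  | zero => simp [addBlocks]
  | succ k ih =>
    simp only [addBlocks, combine, blockProfile, ih, Finset.union_assoc]
    rw [Finset.Ico_union_Ico_eq_Ico (by omega) (by omega)]
    ring_nf

variable (hm : ∀ i ∈ P.voters, i < m)
include hm

theorem disjoint_addBlocks_blockProfile (k : ℕ) :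
    Disjoint (addBlocks P b x z m k).voters (blockProfile b x z (m + 6 * k)).voters := by
  refine Finset.disjoint_left.mpr fun i hi hi' => ?_
  simp only [addBlocks_voters, blockProfile, Finset.mem_union, Finset.mem_Ico] at hi hi'
  rcases hi with hi | hi
  · have := hm i hi; omega
  · omega

theorem addBlocks_rel {k i : ℕ} (hi : i ∈ Finset.Ico m (m + 6 * k)) :
    (addBlocks P b x z m k).rel i = blockBallot b x z ((i - m) % 6) := by
  induction k with
  | zero => simp at hi
  | succ k ih =>
    simp only [Finset.mem_Ico] at hi
    by_cases hik : i < m + 6 * k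
    · have hmem : i ∈ (addBlocks P b x z m k).voters := by
        rw [addBlocks_voters]; simp [hik, hi.1]
      funext a c
      simp [addBlocks, combine, hmem, ih (Finset.mem_Ico.mpr ⟨hi.1, hik⟩)]
    · have hmem : i ∉ (addBlocks P b x z m k).voters := by
        rw [addBlocks_voters]
        simp only [Finset.mem_union, Finset.mem_Ico, not_or]
        exact ⟨fun h => absurd (hm i h) (by omega), by omega⟩
      funext a c
      simp only [addBlocks, combine, hmem, if_false, blockProfile]
      congr 2
      omega

variable (hbx : b ≠ x) (hbz : b ≠ z) (hxz : x ≠ z)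
include hbx hbz hxz

theorem margin_addBlocks (k : ℕ) {a c : α} (ha : a ∈ ({b, x, z} : Finset α))
    (hc : c ∈ ({b, x, z} : Finset α)) : Margin (addBlocks P b x z m k) a c = Margin P a c := by
  induction k with
  | zero => rfl
  | succ k ih =>
    rw [addBlocks, margin_combine _ _ (disjoint_addBlocks_blockProfile hm k), ih,
      margin_blockProfile hbx hbz hxz _ ha hc, add_zero]

theorem addBlocks_mem_Dom23_and_F_subset {F : Profile α → Finset α}
    (bp : BlockPreservation (Dom23 α) F) (hP : P ∈ Dom23 α) (hX : P.alts = {b, x, z}) (k : ℕ) :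
    addBlocks P b x z m k ∈ Dom23 α ∧ F P ⊆ F (addBlocks P b x z m k) := by
  induction k with
  | zero => exact ⟨hP, subset_rfl⟩
  | succ k ih =>
    have hblock : IsBlock (addBlocks P b x z m k).alts (blockProfile b x z (m + 6 * k)) := by
      rw [addBlocks_alts, hX]
      exact isBlock_blockProfile hbx hbz hxz _
    obtain ⟨hdom, hsub⟩ := bp _ ih.1 _ (blockProfile_mem_Dom23 hbx hbz hxz _)
      (disjoint_addBlocks_blockProfile hm k) hblock
    exact ⟨hdom, ih.2.trans hsub⟩

end AddBlocks

section ThreeAlternatives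

variable {F : Profile α → Finset α} {b x z : α} (hbx : b ≠ x) (hbz : b ≠ z) (hxz : x ≠ z)
include hbx hbz hxz

theorem F_setBallot_eq_singleton (wpr : WeakPositiveResponsiveness (Dom23 α) F)
    {N : Profile α} (hN : N ∈ Dom23 α) (hX : N.alts = {b, x, z}) (hb : b ∈ F N) {v : ℕ}
    (hv : v ∈ N.voters) (hvrel : N.rel v = topTwo x z) :
    F (N.setBallot_s7 v (topTwo b x)) = {b} := by
  have hne : b ≠ x ∧ b ≠ z ∧ x ≠ z ∧ x ≠ b ∧ z ≠ b ∧ z ≠ x :=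
    ⟨hbx, hbz, hxz, hbx.symm, hbz.symm, hxz.symm⟩
  refine wpr N hN _ (setBallot_mem_Dom23 hN v (isStrictWeakOrderOn_scoreBallot _ _)) b hb
    ⟨rfl, rfl, by simp [hX], v, hv, ?_, ?_, ?_, ?_⟩
  · intro c hc hcb
    simp only [hX, Finset.mem_insert, Finset.mem_singleton] at hc
    rcases hc with rfl | rfl | rfl <;> simp_all [topTwo, scoreBallot]
  · intro c hc hcb
    simp only [hX, Finset.mem_insert, Finset.mem_singleton] at hc
    rcases hc with rfl | rfl | rfl <;> simp_all [setBallot_s7, topTwo, scoreBallot]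
  · intro c hc hcb c' hc' hcb'
    simp only [hX, Finset.mem_insert, Finset.mem_singleton] at hc hc'
    rcases hc with rfl | rfl | rfl <;> rcases hc' with rfl | rfl | rfl <;>
      simp_all [setBallot_s7, topTwo, scoreBallot]
  · intro j _ hjv _ _ _ _
    simp [setBallot_s7, hjv]

theorem exists_F_eq_singleton (wpr : WeakPositiveResponsiveness (Dom23 α) F)
    (bp : BlockPreservation (Dom23 α) F) {Q : Profile α} (hQ : Q ∈ Dom23 α)
    (hX : Q.alts = {b, x, z}) (hb : b ∈ F Q) (k : ℕ) :
    ∃ N ∈ Dom23 α, N.alts = Q.alts ∧ F N = {b} ∧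
      (∀ a ∈ ({b, x, z} : Finset α), ∀ c ∈ ({b, x, z} : Finset α),
        Margin N a c = Margin Q a c - contrib (topTwo x z) a c + contrib (topTwo b x) a c) ∧
      ∃ S ⊆ N.voters, S.card = k ∧ (N.voters \ S).Nonempty ∧ ∀ i ∈ S, N.rel i = topTwo z b := by
  set m := Q.voters.sup id + 1
  have hm : ∀ i ∈ Q.voters, i < m := fun i hi => Nat.lt_succ_of_le (Finset.le_sup (f := id) hi)
  -- `k + 1` blocks: the last supplies the voter `v` whose ballot `x > z > b` is turned into
  -- `b > x > z`, the others one voter each with ballot `z > b > x`.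
  set B := addBlocks Q b x z m (k + 1)
  obtain ⟨hB, hsub⟩ := addBlocks_mem_Dom23_and_F_subset hm hbx hbz hxz bp hQ hX (k + 1)
  have hBrel : ∀ s t, t ≤ k → s < 6 → B.rel (m + 6 * t + s) = blockBallot b x z s := by
    intro s t ht hs
    rw [addBlocks_rel hm (Finset.mem_Ico.mpr ⟨by omega, by omega⟩)]
    congr 1
    omega
  have hBvoters : ∀ i, m ≤ i → i < m + 6 * (k + 1) → i ∈ B.voters := fun i h₁ h₂ => by
    rw [addBlocks_voters]; simp [h₁, h₂]
  set v := m + 6 * k + 3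
  have hv : v ∈ B.voters := hBvoters v (by omega) (by omega)
  set S := (Finset.range k).image fun t => m + 6 * t + 4
  have hS : ∀ i ∈ S, m ≤ i ∧ i < m + 6 * k ∧ i ≠ v ∧ B.rel i = topTwo z b := by
    simp only [S, Finset.mem_image, Finset.mem_range]
    rintro _ ⟨t, ht, rfl⟩
    exact ⟨by omega, by omega, by omega, hBrel 4 t ht.le (by norm_num)⟩
  refine ⟨B.setBallot_s7 v (topTwo b x),
    setBallot_mem_Dom23 hB v (isStrictWeakOrderOn_scoreBallot _ _),
    addBlocks_alts _, F_setBallot_eq_singleton hbx hbz hxz wpr hB (by rw [addBlocks_alts, hX])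
      (hsub hb) hv (hBrel 3 k le_rfl (by norm_num)), fun a ha c hc => ?_, S, ?_,
    ?_, ?_, ?_⟩
  · rw [margin_setBallot _ hv, hBrel 3 k le_rfl (by norm_num),
      margin_addBlocks hm hbx hbz hxz _ ha hc]
    rfl
  · exact fun i hi => hBvoters i (hS i hi).1 (by have := (hS i hi).2.1; omega)
  · rw [Finset.card_image_of_injective _ fun s t h => by simpa using h, Finset.card_range]
  · obtain ⟨i, hi⟩ := hQ.2.1
    refine ⟨i, Finset.mem_sdiff.mpr ⟨?_, fun hiS => ?_⟩⟩
    · rw [setBallot_s7, addBlocks_voters]; exact Finset.mem_union_left _ hi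
    · exact absurd (hm i hi) (by have := (hS i hiS).1; omega)
  · intro i hi
    simp [setBallot_s7, (hS i hi).2.2.1, (hS i hi).2.2.2]

omit hbx in
theorem F_eraseVoters_eq_singleton_of_margin_pos
    (hF : ∀ P ∈ Dom23 α, (F P).Nonempty ∧ F P ⊆ P.alts) (pinv : PositiveInvolvement (Dom23 α) F)
    (cc : CondorcetConsistent (Dom23 α) F) (hom : Homogeneity (Dom23 α) F) {N : Profile α}
    (hN : N ∈ Dom23 α) (hX : N.alts = {b, x, z}) (hNb : F N = {b}) {S : Finset ℕ}
    (hSN : S ⊆ N.voters) (hSne : (N.voters \ S).Nonempty) (hSrel : ∀ i ∈ S, N.rel i = topTwo z b)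
    (hpos : ∀ U ⊆ S, 0 < Margin (N.eraseVoters U) z x ∧
      0 < Margin (N.eraseVoters U) z x + Margin (N.eraseVoters U) z b) :
    F (N.eraseVoters S) = {b} := by
  have hdom : ∀ U ⊆ S, N.eraseVoters U ∈ Dom23 α := fun U hU =>
    eraseVoters_mem_Dom23 hN (hSne.mono (Finset.sdiff_subset_sdiff le_rfl hU))
  refine F_eraseVoters_eq_singleton hF pinv hbz hSN (fun i hi c hc hcz => ?_) hdom
    (fun U hU w hw => ?_) hNb subset_rfl
  · rw [hSrel i hi]
    simp [topTwo, scoreBallot, hcz]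
    split_ifs <;> simp
  have hwX : w ∈ ({b, x, z} : Finset α) := hX ▸ (hF _ (hdom U hU)).2 hw
  simp only [Finset.mem_insert, Finset.mem_singleton] at hwX ⊢
  rcases hwX with rfl | rfl | rfl
  · exact Or.inl rfl
  · refine absurd hw (not_mem_of_margin_pos_of_add_pos pinv cc hom (hdom U hU) hxz
      (by simp [eraseVoters, hX]) (hpos U hU).1 fun f hf hfx hfz => ?_)
    simp only [eraseVoters, hX, Finset.mem_insert, Finset.mem_singleton] at hf
    rcases hf with rfl | rfl | rfl
    · exact (hpos U hU).2
    · contradiction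
    · contradiction
  · exact Or.inr rfl

theorem not_mem_of_margin_pos_of_le_margin (hF : ∀ P ∈ Dom23 α, (F P).Nonempty ∧ F P ⊆ P.alts)
    (wpr : WeakPositiveResponsiveness (Dom23 α) F) (pinv : PositiveInvolvement (Dom23 α) F)
    (cc : CondorcetConsistent (Dom23 α) F) (hom : Homogeneity (Dom23 α) F)
    (bp : BlockPreservation (Dom23 α) F) {P : Profile α} (hP : P ∈ Dom23 α)
    (hX : P.alts = {b, x, z}) (hxb : 0 < Margin P x b) (hzx : Margin P x b ≤ Margin P z x)
    (hsum : 0 < Margin P x b + Margin P z b) : b ∉ F P := by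
  intro hb
  have hne : b ≠ x ∧ b ≠ z ∧ x ≠ z ∧ x ≠ b ∧ z ≠ b ∧ z ≠ x :=
    ⟨hbx, hbz, hxz, hbx.symm, hbz.symm, hxz.symm⟩
  obtain ⟨hP₁, hF₁⟩ := hom P hP
  obtain ⟨hP₂, hF₂⟩ := hom _ hP₁
  obtain ⟨hP₃, hF₃⟩ := hom _ hP₂
  -- The factor 8 absorbs the shift by 2 caused by the pivot voter; after `J` removals
  -- `Margin x b + Margin x z = 2`.
  set J := (4 * (Margin P z x - Margin P x b) + 2).toNat
  have hJ : (J : ℤ) = 4 * (Margin P z x - Margin P x b) + 2 := Int.toNat_of_nonneg (by omega)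
  obtain ⟨N, hN, hNX, hNb, hNmargin, S, hSN, hScard, hSne, hSrel⟩ :=
    exists_F_eq_singleton hbx hbz hxz wpr bp hP₃ hX (hF₃ (hF₂ (hF₁ hb))) J
  replace hNX : N.alts = {b, x, z} := hNX.trans hX
  have hmargin : ∀ U ⊆ S, Margin (N.eraseVoters U) x b = 8 * Margin P x b - 2 + U.card ∧
      Margin (N.eraseVoters U) z b = 8 * Margin P z b - 2 - U.card ∧
      Margin (N.eraseVoters U) z x = 8 * Margin P z x - U.card := by
    intro U hU
    simp only [margin_eraseVoters N (hU.trans hSN) fun i hi => hSrel i (hU hi)]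
    rw [hNmargin x (by simp) b (by simp), hNmargin z (by simp) b (by simp),
      hNmargin z (by simp) x (by simp)]
    simp only [margin_double]
    refine ⟨?_, ?_, ?_⟩ <;> simp [contrib, topTwo, scoreBallot, hne] <;> ring
  have hkeep : F (N.eraseVoters S) = {b} := by
    refine F_eraseVoters_eq_singleton_of_margin_pos hbz hxz hF pinv cc hom hN hNX hNb hSN
      hSne hSrel fun U hU => ?_
    obtain ⟨-, hzb', hzx'⟩ := hmargin U hU
    have : U.card ≤ J := hScard ▸ Finset.card_le_card hU
    omega
  obtain ⟨hxb', -, hzx'⟩ := hmargin S subset_rfl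
  rw [hScard] at hxb' hzx'
  refine not_mem_of_margin_pos_of_add_pos pinv cc hom (eraseVoters_mem_Dom23 hN hSne) hbx
    (by simp [eraseVoters, hNX]) (by omega) (fun f hf hfb hfx => ?_) (by simp [hkeep])
  simp only [eraseVoters, hNX, Finset.mem_insert, Finset.mem_singleton] at hf
  rcases hf with rfl | rfl | rfl
  · contradiction
  · contradiction
  · rw [margin_swap _ x f]
    omega

end ThreeAlternatives

theorem mmScore_eq_max' {P : Profile α} {a : α} (h : (P.alts.erase a).Nonempty) :
    MMScore P a = ((P.alts.erase a).image fun b => Margin P b a).max'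
      (h.image fun b => Margin P b a) := by
  rw [MMScore, ← Finset.coe_max' (h.image fun b => Margin P b a), WithBot.unbotD_coe]

theorem margin_le_mmScore_s7 {P : Profile α} {a y : α} (hy : y ∈ P.alts) (hya : y ≠ a) :
    Margin P y a ≤ MMScore P a := by
  have hy' : y ∈ P.alts.erase a := Finset.mem_erase.mpr ⟨hya, hy⟩
  rw [mmScore_eq_max' ⟨y, hy'⟩]
  exact Finset.le_max' _ _ (Finset.mem_image_of_mem (fun b => Margin P b a) hy')

theorem exists_mmScore_eq {P : Profile α} {a : α} (h : (P.alts.erase a).Nonempty) :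
    ∃ y ∈ P.alts, y ≠ a ∧ MMScore P a = Margin P y a := by
  obtain ⟨y, hy, hmax⟩ := Finset.mem_image.mp (Finset.max'_mem _ (h.image fun b => Margin P b a))
  obtain ⟨hya, hy⟩ := Finset.mem_erase.mp hy
  exact ⟨y, hy, hya, (mmScore_eq_max' h).trans hmax.symm⟩

theorem exists_margin_pos_of_mmScore_lt {P : Profile α} {w y : α} (hw : w ∈ P.alts)
    (hy : y ∈ P.alts) (hlt : MMScore P y < MMScore P w) :
    ∃ x ∈ P.alts, x ≠ w ∧ 0 < Margin P x w ∧ MMScore P w = Margin P x w := by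
  have hyw : y ≠ w := by rintro rfl; exact lt_irrefl _ hlt
  obtain ⟨x, hx, hxw, hscore⟩ := exists_mmScore_eq ⟨y, Finset.mem_erase.mpr ⟨hyw, hy⟩⟩
  refine ⟨x, hx, hxw, ?_, hscore⟩
  have := margin_le_mmScore_s7 hw hyw.symm
  have := margin_le_mmScore_s7 hy hyw
  have := margin_swap P w y
  omega

theorem alts_eq_of_mem_Dom23 {P : Profile α} (hP : P ∈ Dom23 α) {w x z : α} (hw : w ∈ P.alts)
    (hx : x ∈ P.alts) (hz : z ∈ P.alts) (hwx : w ≠ x) (hwz : w ≠ z) (hxz : x ≠ z) :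
    P.alts = {w, x, z} := by
  refine (Finset.eq_of_subset_of_card_le (by simp [Finset.insert_subset_iff, *]) ?_).symm
  rw [Finset.card_insert_of_notMem (by simp [hwx, hwz]), Finset.card_pair hxz]
  have := hP.2.2
  omega

theorem add_margin_pos_of_mmScore_lt {P : Profile α} {w x z y : α} (hX : P.alts = {w, x, z})
    (hzw : z ≠ w) (hzx : z ≠ x) (hy : y ∈ P.alts) (hlt : MMScore P y < MMScore P w)
    (hscore : MMScore P w = Margin P x w) (hle : Margin P x w + Margin P x z ≤ 0) :
    0 < Margin P x w + Margin P z w := by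
  have hz : z ∈ P.alts := by simp [hX]
  -- `y` can be neither `w` nor `x`, since `MMScore P x ≥ Margin P z x ≥ MMScore P w`.
  obtain rfl : y = z := by
    simp only [hX, Finset.mem_insert, Finset.mem_singleton] at hy
    rcases hy with rfl | rfl | rfl
    · exact absurd hlt (lt_irrefl _)
    · have := margin_le_mmScore_s7 hz hzx
      have := margin_swap P z y
      omega
    · rfl
  have := margin_le_mmScore_s7 (by simp [hX] : w ∈ P.alts) hzw.symm
  have := margin_swap P w y
  omega

theorem main_theorem_condorcet_version_general {α : Type*} [DecidableEq α]
    (F : Profile α → Finset α)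
    (hF : ∀ P ∈ Dom23 α, (F P).Nonempty ∧ F P ⊆ P.alts)
    (wpr : WeakPositiveResponsiveness (Dom23 α) F)
    (pinv : PositiveInvolvement (Dom23 α) F)
    (cc : CondorcetConsistent (Dom23 α) F)
    (hom : Homogeneity (Dom23 α) F)
    (bp : BlockPreservation (Dom23 α) F) :
    ∀ P ∈ Dom23 α, F P ⊆ Minimax P := by
  intro P hP w hw
  have hwX : w ∈ P.alts := (hF P hP).2 hw
  refine Finset.mem_filter.mpr ⟨hwX, fun y hy => ?_⟩
  by_contra! hlt
  obtain ⟨x, hx, hxw, hpos, hscore⟩ := exists_margin_pos_of_mmScore_lt hwX hy hlt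
  by_cases hall : ∀ f ∈ P.alts, f ≠ w → f ≠ x → 0 < Margin P x w + Margin P x f
  · exact not_mem_of_margin_pos_of_add_pos pinv cc hom hP hxw.symm hx hpos hall hw
  push Not at hall
  obtain ⟨z, hz, hzw, hzx, hle⟩ := hall
  have hX := alts_eq_of_mem_Dom23 hP hwX hx hz hxw.symm hzw.symm hzx.symm
  exact not_mem_of_margin_pos_of_le_margin hxw.symm hzw.symm hzx.symm hF wpr pinv cc hom bp hP hX
    hpos (by rw [margin_swap P z x]; omega)
    (add_margin_pos_of_mmScore_lt hX hzw hzx hy hlt hscore hle) hw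

/-- The main theorem with near immunity to spoilers replaced by Condorcet
consistency: such a voting method refines Minimax. -/
theorem main_theorem_condorcet_version {α : Type*} [DecidableEq α]
    (hX : ∃ x y z : α, x ≠ y ∧ x ≠ z ∧ y ≠ z)
    (F : Profile α → Finset α)
    (hF : ∀ P ∈ Dom23 α, (F P).Nonempty ∧ F P ⊆ P.alts)
    (anon : Anonymity (Dom23 α) F)
    (neut : Neutrality (Dom23 α) F)
    (wpr : WeakPositiveResponsiveness (Dom23 α) F)
    (pinv : PositiveInvolvement (Dom23 α) F)
    (cc : CondorcetConsistent (Dom23 α) F)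
    (hom : Homogeneity (Dom23 α) F)
    (bp : BlockPreservation (Dom23 α) F) :
    ∀ P ∈ Dom23 α, F P ⊆ Minimax P :=
  main_theorem_condorcet_version_general F hF wpr pinv cc hom bp

end MayMinimax
end

section
/- Let F be a voting method whose domain is the set of all profiles with two or three alternatives. If F satisfies neutrality, weak positive responsiveness, homogeneity, and block preservation, then F agrees with majority voting in any two-alternative profile with a unique majority winner: for any profile P with X(P) = {a,b} such that strictly more voters rank a above b than rank b above a, F(P) = {a}. -/
/-!
Formalization of notions from "An extension of May's Theorem to three
alternatives: axiomatizing Minimax voting" by Holliday and Pacuit.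

The set of voters is the countably infinite set `ℕ`; the set `α` of
alternatives is a type (assumed to have at least three elements where the
paper assumes `|𝒳| ≥ 3`).
-/

namespace MayMinimax

variable {α : Type*} [DecidableEq α]

/-!
By neutrality (with the identity permutation) `F` only sees the ballots on `{a, b}`, so a
two-alternative profile may be replaced by `pairProfile V A B a b`: the voters in `A` rank `a`
above `b`, those in `B` rank `b` above `a`, and the rest of `V` are indifferent.

If `B` is empty and `A` is not, then `F` picks `a` alone: were `b` chosen, moving the voters of
`A` over to `b` one at a time would keep `b` the unique winner by weak positive responsiveness,
and the final profile is the mirror image of the first, so by neutrality `a` is the unique winner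
of the first. One voter of `A` and one of `B` form a block for `{a, b}`, so block preservation and
induction on `|B|` give `a ∈ F` whenever `|A| > |B|`. If even `|A| ≥ |B| + 3`, `a` still wins
after one voter of `A` moves to `b`, and moving back is a last-to-first move, so `F` picks `a`
alone. Homogeneity reduces a positive margin to this case: `F P ⊆ F (2P) ⊆ F (4P)`, and the margin
of `4P` is at least 4.
-/

theorem Neutrality.eq_of_agree {D : Set (Profile α)} {F : Profile α → Finset α}
    (neut : Neutrality D F) {P Q : Profile α} (hP : P ∈ D) (hQ : Q ∈ D)
    (hvoters : P.voters = Q.voters) (halts : P.alts = Q.alts)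
    (hrel : ∀ i ∈ P.voters, ∀ x ∈ P.alts, ∀ y ∈ P.alts, P.rel i x y = Q.rel i x y) :
    F P = F Q := by
  simpa using neut P hP Q hQ hvoters (Equiv.refl α) (by simpa using halts) (by simpa using hrel)

def pairProfile (V A B : Finset ℕ) (a b : α) : Profile α where
  voters := V
  alts := {a, b}
  rel i x y := decide (i ∈ A ∧ x = a ∧ y = b ∨ i ∈ B ∧ x = b ∧ y = a)

section PairProfile

variable {V A B : Finset ℕ} {a b : α}

theorem pairProfile_comm (V A B : Finset ℕ) (a b : α) :
    pairProfile V A B a b = pairProfile V B A b a := by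
  simp only [pairProfile, Finset.pair_comm a b, or_comm]

theorem pairProfile_mem_dom23 (hab : a ≠ b) (hV : V.Nonempty) (hAB : Disjoint A B) :
    pairProfile V A B a b ∈ Dom23 α := by
  have hdisj : ∀ i ∈ A, i ∉ B := fun _ hi => Finset.disjoint_left.1 hAB hi
  refine ⟨fun i _ => ⟨?_, ?_⟩, hV, Or.inl (Finset.card_pair hab)⟩ <;>
    simp only [pairProfile, Finset.mem_insert, Finset.mem_singleton] <;> grind

theorem Neutrality.image_swap_pairProfile {F : Profile α → Finset α}
    (neut : Neutrality (Dom23 α) F) (hab : a ≠ b) (hV : V.Nonempty) (hAB : Disjoint A B) :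
    (F (pairProfile V A B a b)).image (Equiv.swap a b) = F (pairProfile V A B b a) := by
  refine neut _ (pairProfile_mem_dom23 hab hV hAB) _
    (pairProfile_mem_dom23 hab.symm hV hAB) rfl _ ?_ ?_
  · simp [pairProfile, Finset.image_insert, Finset.pair_comm]
  · intro i _ x _ y _
    simp only [pairProfile, Equiv.swap_apply_eq_iff, Equiv.swap_apply_left,
      Equiv.swap_apply_right]

theorem moveLastToFirst_pairProfile {v : ℕ} (hab : a ≠ b) (hAV : A ⊆ V) (hv : v ∈ A) :
    MoveLastToFirst (pairProfile V A B a b) (pairProfile V (A.erase v) (insert v B) a b) b := by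
  refine ⟨rfl, rfl, by simp [pairProfile], v, hAV hv, ?_, ?_, ?_, ?_⟩ <;>
    simp +contextual [pairProfile, hv, hab]

theorem isBlock_pairProfile {x w : ℕ} (hxw : x ≠ w) (hab : a ≠ b) :
    IsBlock {a, b} (pairProfile {x, w} {x} {w} a b) := by
  refine ⟨rfl, ?_, fun r ⟨hirr, _, htot, hasym⟩ => ?_⟩
  · simp only [IsLinearOn, pairProfile]
    grind
  · have ha : a ∈ ({a, b} : Finset α) := by simp
    have hb : b ∈ ({a, b} : Finset α) := by simp
    rcases htot a ha b hb hab with h | h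
    · refine ⟨x, ?_, ?_⟩ <;>
        simp only [pairProfile, Finset.mem_insert, Finset.mem_singleton, forall_eq_or_imp,
          forall_eq] <;> grind
    · refine ⟨w, ?_, ?_⟩ <;>
        simp only [pairProfile, Finset.mem_insert, Finset.mem_singleton, forall_eq_or_imp,
          forall_eq] <;> grind

end PairProfile

section VotingMethod

variable {F : Profile α → Finset α} {V A B : Finset ℕ} {a b : α}

theorem WeakPositiveResponsiveness.pairProfile_erase_insert
    (wpr : WeakPositiveResponsiveness (Dom23 α) F) (hab : a ≠ b) (hAV : A ⊆ V)
    (hAB : Disjoint A B) {v : ℕ} (hv : v ∈ A) (hb : b ∈ F (pairProfile V A B a b)) :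
    F (pairProfile V (A.erase v) (insert v B) a b) = {b} := by
  have hV : V.Nonempty := ⟨v, hAV hv⟩
  have hAB' := (Finset.disjoint_insert_erase (Finset.disjoint_left.1 hAB hv)).2 hAB
  exact wpr _ (pairProfile_mem_dom23 hab hV hAB) _ (pairProfile_mem_dom23 hab hV hAB') b hb
    (moveLastToFirst_pairProfile hab hAV hv)

theorem WeakPositiveResponsiveness.pairProfile_empty_union_eq_singleton
    (wpr : WeakPositiveResponsiveness (Dom23 α) F) (hab : a ≠ b) (hAV : A ⊆ V)
    (hAB : Disjoint A B) (hA : A.Nonempty) (hb : b ∈ F (pairProfile V A B a b)) :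
    F (pairProfile V ∅ (A ∪ B) a b) = {b} := by
  induction hA using Finset.Nonempty.cons_induction generalizing B with
  | singleton v =>
    have hstep := wpr.pairProfile_erase_insert hab hAV hAB (Finset.mem_singleton_self v) hb
    rwa [Finset.erase_singleton, Finset.insert_eq] at hstep
  | cons v A hvA hA ih =>
    rw [Finset.cons_eq_insert] at hAV hAB hb
    have hstep := wpr.pairProfile_erase_insert hab hAV hAB (Finset.mem_insert_self v A) hb
    rw [Finset.erase_insert hvA] at hstep
    rw [Finset.cons_eq_insert, Finset.insert_union, ← Finset.union_insert]
    exact ih ((Finset.subset_insert v A).trans hAV)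
      (Finset.disjoint_insert_right.2 ⟨hvA, hAB.mono_left (Finset.subset_insert v A)⟩)
      (by simp [hstep])

theorem pairProfile_unanimous_eq_singleton
    (hF : ∀ P ∈ Dom23 α, (F P).Nonempty ∧ F P ⊆ P.alts) (neut : Neutrality (Dom23 α) F)
    (wpr : WeakPositiveResponsiveness (Dom23 α) F) (hab : a ≠ b) (hAV : A ⊆ V) (hA : A.Nonempty) :
    F (pairProfile V A ∅ a b) = {a} := by
  have hV : V.Nonempty := hA.mono hAV
  have hAB : Disjoint A ∅ := Finset.disjoint_empty_right A
  obtain ⟨hne, hsub⟩ := hF _ (pairProfile_mem_dom23 hab hV hAB)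
  by_cases hb : b ∈ F (pairProfile V A ∅ a b)
  · have hall := wpr.pairProfile_empty_union_eq_singleton hab hAV hAB hA hb
    rw [Finset.union_empty, pairProfile_comm, ← neut.image_swap_pairProfile hab hV hAB] at hall
    exact Finset.image_injective (Equiv.swap a b).injective (by simpa using hall)
  · rw [← hne.subset_singleton_iff]
    intro x hx
    have hx' := hsub hx
    simp only [pairProfile, Finset.mem_insert, Finset.mem_singleton] at hx'
    rcases hx' with rfl | rfl
    · exact Finset.mem_singleton_self x
    · exact absurd hx hb

theorem mem_pairProfile_of_card_lt
    (hF : ∀ P ∈ Dom23 α, (F P).Nonempty ∧ F P ⊆ P.alts) (neut : Neutrality (Dom23 α) F)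
    (wpr : WeakPositiveResponsiveness (Dom23 α) F) (bp : BlockPreservation (Dom23 α) F)
    (hab : a ≠ b) (hAV : A ⊆ V) (hBV : B ⊆ V) (hAB : Disjoint A B) (hcard : B.card < A.card) :
    a ∈ F (pairProfile V A B a b) := by
  induction B using Finset.induction_on generalizing A V with
  | empty =>
    rw [pairProfile_unanimous_eq_singleton hF neut wpr hab hAV
      (Finset.card_pos.1 (by simpa using hcard))]
    exact Finset.mem_singleton_self a
  | insert w B hwB ih =>
    obtain ⟨x, hx⟩ : A.Nonempty := Finset.card_pos.1 (by omega)
    have hxB : x ∉ insert w B := Finset.disjoint_left.1 hAB hx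
    have hxw : x ≠ w := fun h => hxB (h ▸ Finset.mem_insert_self w B)
    set V' := (V.erase x).erase w
    have hAB' : Disjoint (A.erase x) B :=
      hAB.mono (A.erase_subset x) (Finset.subset_insert w B)
    have hAV' : A.erase x ⊆ V' := by
      intro i hi
      have := Finset.disjoint_left.1 hAB (Finset.mem_of_mem_erase hi)
      simp only [V', Finset.mem_erase, Finset.mem_insert] at hi this ⊢
      grind
    have hBV' : B ⊆ V' := by
      intro i hi
      simp only [V', Finset.mem_erase]
      grind
    have hcard' : B.card < (A.erase x).card := by
      rw [Finset.card_erase_of_mem hx]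
      rw [Finset.card_insert_of_notMem hwB] at hcard
      omega
    have hV' : V'.Nonempty := (Finset.card_pos.1 (by omega)).mono hAV'
    obtain ⟨hcomb, hsubset⟩ := bp _ (pairProfile_mem_dom23 hab hV' hAB') _
      (pairProfile_mem_dom23 hab (Finset.insert_nonempty x {w}) (Finset.disjoint_singleton.2 hxw))
      (by simp [pairProfile, V', Finset.disjoint_insert_right]) (isBlock_pairProfile hxw hab)
    rw [← neut.eq_of_agree hcomb (pairProfile_mem_dom23 hab ⟨x, hAV hx⟩ hAB) ?_ rfl ?_]
    · exact hsubset (ih hAV' hBV' hAB' hcard')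
    · simp only [Profile.combine, pairProfile, V']
      grind
    · intro i _ u _ v _
      simp only [Profile.combine, pairProfile, V']
      grind

theorem pairProfile_eq_singleton_of_card_add_three_le
    (hF : ∀ P ∈ Dom23 α, (F P).Nonempty ∧ F P ⊆ P.alts) (neut : Neutrality (Dom23 α) F)
    (wpr : WeakPositiveResponsiveness (Dom23 α) F) (bp : BlockPreservation (Dom23 α) F)
    (hab : a ≠ b) (hAV : A ⊆ V) (hBV : B ⊆ V) (hAB : Disjoint A B)
    (hcard : B.card + 3 ≤ A.card) :
    F (pairProfile V A B a b) = {a} := by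
  obtain ⟨x, hx⟩ : A.Nonempty := Finset.card_pos.1 (by omega)
  have hxB : x ∉ B := Finset.disjoint_left.1 hAB hx
  have hxBV : insert x B ⊆ V := Finset.insert_subset (hAV hx) hBV
  have hAB' := (Finset.disjoint_insert_erase hxB).2 hAB
  have ha : a ∈ F (pairProfile V (A.erase x) (insert x B) a b) := by
    refine mem_pairProfile_of_card_lt hF neut wpr bp hab ((A.erase_subset x).trans hAV) hxBV hAB' ?_
    rw [Finset.card_erase_of_mem hx, Finset.card_insert_of_notMem hxB]
    omega
  rw [pairProfile_comm] at ha
  have hback := wpr.pairProfile_erase_insert hab.symm hxBV hAB'.symm (Finset.mem_insert_self x B) ha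
  rwa [Finset.erase_insert hxB, Finset.insert_erase hx, ← pairProfile_comm] at hback

end VotingMethod

theorem IsSWO.disjoint_filter_rel {β : Type*} {P : Profile β} (hP : IsSWO P) {a b : β}
    (ha : a ∈ P.alts) (hb : b ∈ P.alts) :
    Disjoint (P.voters.filter fun i => P.rel i a b = true)
      (P.voters.filter fun i => P.rel i b a = true) :=
  Finset.disjoint_filter.2 fun i hi hab hba => by simp [(hP i hi).1 a ha b hb hab] at hba

theorem Neutrality.eq_pairProfile {F : Profile α → Finset α} (neut : Neutrality (Dom23 α) F)
    {P : Profile α} (hP : P ∈ Dom23 α) {a b : α} (hab : a ≠ b) (halts : P.alts = {a, b}) :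
    F P = F (pairProfile P.voters (P.voters.filter fun i => P.rel i a b = true)
      (P.voters.filter fun i => P.rel i b a = true) a b) := by
  have ha : a ∈ P.alts := by simp [halts]
  have hb : b ∈ P.alts := by simp [halts]
  refine neut.eq_of_agree hP (pairProfile_mem_dom23 hab hP.2.1 (hP.1.disjoint_filter_rel ha hb))
    rfl halts ?_
  intro i hi x hx y hy
  have hasym := (hP.1 i hi).1
  simp only [halts, Finset.mem_insert, Finset.mem_singleton] at hx hy hasym
  simp only [pairProfile, Finset.mem_filter]
  grind

theorem support_double {β : Type*} (P : Profile β) (a b : β) :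
    Support P.double a b = 2 * Support P a b := by
  set K := P.voters.sup id + 1
  have hshift : ∀ i ∈ P.voters, i + K ∉ P.voters := fun i _ hiK => by
    have := Finset.le_sup (f := id) hiK
    simp only [id] at this
    omega
  have hdisj : Disjoint P.voters (P.voters.image (· + K)) := by
    simpa [Finset.disjoint_right] using hshift
  have horig : P.voters.filter (fun i => P.double.rel i a b = true) =
      P.voters.filter fun i => P.rel i a b = true :=
    Finset.filter_congr fun i hi => by simp [Profile.double, hi]
  have hcopy : (P.voters.image (· + K)).filter (fun i => P.double.rel i a b = true) =
      (P.voters.filter fun i => P.rel i a b = true).image (· + K) := by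
    rw [Finset.filter_image]
    congr 1
    exact Finset.filter_congr fun i hi => by simp [Profile.double, hshift i hi, K]
  change ((P.voters ∪ P.voters.image (· + K)).filter _).card = _
  rw [Finset.filter_union, Finset.card_union_of_disjoint (Finset.disjoint_filter_filter hdisj),
    horig, hcopy, Finset.card_image_of_injective _ (add_left_injective K), two_mul]
  rfl

theorem eq_singleton_of_support_add_three_le {F : Profile α → Finset α}
    (hF : ∀ P ∈ Dom23 α, (F P).Nonempty ∧ F P ⊆ P.alts) (neut : Neutrality (Dom23 α) F)
    (wpr : WeakPositiveResponsiveness (Dom23 α) F) (bp : BlockPreservation (Dom23 α) F)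
    {P : Profile α} (hP : P ∈ Dom23 α) {a b : α} (halts : P.alts = {a, b})
    (hsupport : Support P b a + 3 ≤ Support P a b) :
    F P = {a} := by
  have hab : a ≠ b := by
    rintro rfl
    omega
  have ha : a ∈ P.alts := by simp [halts]
  have hb : b ∈ P.alts := by simp [halts]
  rw [neut.eq_pairProfile hP hab halts]
  exact pairProfile_eq_singleton_of_card_add_three_le hF neut wpr bp hab (Finset.filter_subset _ _)
    (Finset.filter_subset _ _) (hP.1.disjoint_filter_rel ha hb) hsupport

theorem majority_without_anonymity_general {α : Type*} [DecidableEq α]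
    (F : Profile α → Finset α)
    (hF : ∀ P ∈ Dom23 α, (F P).Nonempty ∧ F P ⊆ P.alts)
    (neut : Neutrality (Dom23 α) F)
    (wpr : WeakPositiveResponsiveness (Dom23 α) F)
    (hom : Homogeneity (Dom23 α) F)
    (bp : BlockPreservation (Dom23 α) F) :
    ∀ P ∈ Dom23 α, ∀ a b : α, P.alts = {a, b} →
      0 < Margin P a b → F P = {a} := by
  intro P hP a b halts hmargin
  have hsupport : Support P b a < Support P a b := by
    have : (0 : ℤ) < Support P a b - Support P b a := hmargin
    omega
  obtain ⟨hP2, hsub2⟩ := hom P hP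
  obtain ⟨hP4, hsub4⟩ := hom _ hP2
  have h4 : F P.double.double = {a} :=
    eq_singleton_of_support_add_three_le hF neut wpr bp hP4 halts
      (by simp only [support_double]; omega)
  exact (hF P hP).1.subset_singleton_iff.1 (h4 ▸ hsub2.trans hsub4)

/-- Anonymity can be dropped: a voting method on the domain of profiles with
two or three alternatives satisfying neutrality, weak positive responsiveness,
homogeneity, and block preservation agrees with majority voting on any
two-alternative profile with a unique majority winner. -/
theorem majority_without_anonymity {α : Type*} [DecidableEq α]
    (hX : ∃ x y z : α, x ≠ y ∧ x ≠ z ∧ y ≠ z)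
    (F : Profile α → Finset α)
    (hF : ∀ P ∈ Dom23 α, (F P).Nonempty ∧ F P ⊆ P.alts)
    (neut : Neutrality (Dom23 α) F)
    (wpr : WeakPositiveResponsiveness (Dom23 α) F)
    (hom : Homogeneity (Dom23 α) F)
    (bp : BlockPreservation (Dom23 α) F) :
    ∀ P ∈ Dom23 α, ∀ a b : α, P.alts = {a, b} →
      0 < Margin P a b → F P = {a} :=
  majority_without_anonymity_general F hF neut wpr hom bp

end MayMinimax
end

section
/- The Condorcet-Plurality voting method CP violates positive involvement: there exist a three-alternative profile P, an alternative x ∈ CP(P), and a profile P' obtained from P by adding one new voter who ranks x uniquely first, such that x ∉ CP(P'). -/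
/-!
Formalization of notions from "An extension of May's Theorem to three
alternatives: axiomatizing Minimax voting" by Holliday and Pacuit.

The set of voters is the countably infinite set `ℕ`; the set `α` of
alternatives is a type (assumed to have at least three elements where the
paper assumes `|𝒳| ≥ 3`).
-/

namespace MayMinimax

variable {α : Type*} [DecidableEq α]

/-!
Six voters whose majority relation is the cycle `x ≻ y ≻ z ≻ x` and who give each alternative
the same plurality score make CP elect all three alternatives; a seventh voter `x ≻ z ≻ y` turns
`z` into the unique weak Condorcet winner. Since CP is neutral, it suffices to check this on
`Fin 3` and pull the profiles back along a labelling of `x, y, z`.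
-/

def Profile.ofUtility {β : Type*} (V : Finset ℕ) (A : Finset β) (u : ℕ → β → ℕ) : Profile β :=
  ⟨V, A, fun i a b => decide (u i b < u i a)⟩

theorem isSWO_ofUtility {β : Type*} (V : Finset ℕ) (A : Finset β) (u : ℕ → β → ℕ) :
    IsSWO (Profile.ofUtility V A u) := by
  intro i _
  simp only [Profile.ofUtility, decide_eq_true_eq, decide_eq_false_iff_not, not_lt]
  exact ⟨fun _ _ _ _ h => h.le, fun _ _ _ _ _ _ h₁ h₂ => h₁.trans h₂⟩

def Profile.comap {α β : Type*} (P : Profile β) (g : α → β) (A : Finset α) : Profile α :=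
  ⟨P.voters, A, fun i a b => P.rel i (g a) (g b)⟩

theorem cp_subset_alts {α : Type*} [DecidableEq α] (P : Profile α) : CP P ⊆ P.alts := by
  unfold CP WeakCondorcetWinners
  split_ifs <;> exact Finset.filter_subset _ _

section Comap

variable {α β : Type*} {P : Profile β} {g : α → β} {A : Finset α}

theorem isSWO_comap (hP : IsSWO P) (hA : Set.MapsTo g A P.alts) : IsSWO (P.comap g A) :=
  fun i hi => ⟨fun _ ha _ hb => (hP i hi).1 _ (hA ha) _ (hA hb),
    fun _ ha _ hb _ hc => (hP i hi).2 _ (hA ha) _ (hA hb) _ (hA hc)⟩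

theorem addTopVoter_comap {P' : Profile β} {a : α} (h : AddTopVoter P P' (g a))
    (ha : a ∈ A) (hg : Set.InjOn g A) (hA : Set.MapsTo g A P.alts) :
    AddTopVoter (P.comap g A) (P'.comap g A) a := by
  obtain ⟨-, j, hj, hV, htop, hold⟩ := h
  exact ⟨rfl, j, hj, hV, fun b hb hba => htop _ (hA hb) (hg.ne hb ha hba),
    fun i hi x hx y hy => hold i hi _ (hA hx) _ (hA hy)⟩

variable [DecidableEq β]

theorem image_weakCondorcetWinners_comap (hA : A.image g = P.alts) :
    (WeakCondorcetWinners (P.comap g A)).image g = WeakCondorcetWinners P := by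
  simp only [WeakCondorcetWinners, ← hA, Finset.filter_image, Finset.forall_mem_image]
  rfl

variable [DecidableEq α]

theorem pluralityScore_comap (hA : A.image g = P.alts) (hg : Set.InjOn g A) {a : α}
    (ha : a ∈ A) : PluralityScore (P.comap g A) a = PluralityScore P (g a) := by
  simp only [PluralityScore, ← hA, Finset.forall_mem_image]
  refine congrArg Finset.card (Finset.filter_congr fun i _ => forall₂_congr fun b hb => ?_)
  rw [hg.ne_iff hb ha]
  rfl

theorem image_cp_comap (hA : A.image g = P.alts) (hg : Set.InjOn g A) :
    (CP (P.comap g A)).image g = CP P := by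
  have hW := image_weakCondorcetWinners_comap hA
  by_cases hne : (WeakCondorcetWinners (P.comap g A)).Nonempty
  · rw [CP, if_pos hne, CP, if_pos (hW ▸ hne.image g), hW]
  · rw [CP, if_neg hne, CP, if_neg (by rwa [← hW, Finset.image_nonempty]), ← hA,
      Finset.filter_image]
    refine congrArg _ (Finset.filter_congr fun a ha => ?_)
    simp only [Finset.forall_mem_image, pluralityScore_comap hA hg ha]
    exact forall₂_congr fun b hb => by rw [pluralityScore_comap hA hg hb]

theorem mem_cp_comap_iff (hA : A.image g = P.alts) (hg : Set.InjOn g A) {a : α} (ha : a ∈ A) :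
    a ∈ CP (P.comap g A) ↔ g a ∈ CP P := by
  rw [← image_cp_comap hA hg]
  refine ⟨Finset.mem_image_of_mem g, fun h => ?_⟩
  obtain ⟨b, hb, hba⟩ := Finset.mem_image.1 h
  rwa [← hg (cp_subset_alts _ hb) ha hba]

end Comap

theorem exists_fin_three_labelling {α : Type*} [DecidableEq α] {x y z : α}
    (hxy : x ≠ y) (hxz : x ≠ z) (hyz : y ≠ z) :
    ∃ g : α → Fin 3, g x = 0 ∧ Set.InjOn g ↑({x, y, z} : Finset α) ∧
      ({x, y, z} : Finset α).image g = Finset.univ := by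
  refine ⟨fun a => if a = x then 0 else if a = y then 1 else 2, by simp, ?_, ?_⟩
  · intro a ha b hb
    simp only [Finset.coe_insert, Finset.coe_singleton, Set.mem_insert_iff,
      Set.mem_singleton_iff] at ha hb
    rcases ha with rfl | rfl | rfl <;> rcases hb with rfl | rfl | rfl <;> simp_all [eq_comm]
  · simp only [Finset.image_insert, Finset.image_singleton, ↓reduceIte, hxy.symm, hxz.symm,
      hyz.symm]
    decide

/-- Utilities for the ballots `x ≻ y ∼ z`, `x ≻ y ≻ z`, `z ≻ x ≻ y` (twice), `y ≻ z ≻ x` (twice)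
and finally `x ≻ z ≻ y`, where `x, y, z = 0, 1, 2`. -/
def cycleBallot : ℕ → Fin 3 → ℕ
  | 0 => ![1, 0, 0]
  | 1 => ![2, 1, 0]
  | 2 | 3 => ![1, 0, 2]
  | 4 | 5 => ![0, 2, 1]
  | _ => ![2, 0, 1]

def cycleProfile (n : ℕ) : Profile (Fin 3) :=
  .ofUtility (Finset.range n) Finset.univ cycleBallot

/-- The margins of `x` over `y`, `y` over `z` and `z` over `x` are 2, 1, 2, and every plurality
score is 2. -/
theorem cp_cycleProfile_six : CP (cycleProfile 6) = Finset.univ := by decide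

/-- `z` beats `x` by 1 and ties with `y`; `x` and `y` both lose to someone. -/
theorem cp_cycleProfile_seven : CP (cycleProfile 7) = {2} := by decide

theorem addTopVoter_cycleProfile : AddTopVoter (cycleProfile 6) (cycleProfile 7) 0 :=
  ⟨rfl, 6, by decide, by decide, by decide, fun _ _ _ _ _ _ => rfl⟩

/-- Condorcet-Plurality violates positive involvement: there are a
three-alternative profile `P`, an alternative `x ∈ CP(P)`, and a profile `P'`
obtained from `P` by adding one new voter ranking `x` uniquely first, such
that `x ∉ CP(P')`. -/
theorem cp_violates_positive_involvement {α : Type*} [DecidableEq α]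
    (hX : ∃ x y z : α, x ≠ y ∧ x ≠ z ∧ y ≠ z) :
    ∃ (P P' : Profile α) (x : α),
      IsSWO P ∧ P.voters.Nonempty ∧ P.alts.card = 3 ∧ IsSWO P' ∧
      x ∈ CP P ∧ AddTopVoter P P' x ∧ x ∉ CP P' := by
  obtain ⟨x, y, z, hxy, hxz, hyz⟩ := hX
  obtain ⟨g, hgx, hg, hA⟩ := exists_fin_three_labelling hxy hxz hyz
  have hx : x ∈ ({x, y, z} : Finset α) := Finset.mem_insert_self _ _
  have hmaps (n : ℕ) : Set.MapsTo g ↑({x, y, z} : Finset α) (cycleProfile n).alts :=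
    fun _ _ => Finset.mem_univ _
  refine ⟨(cycleProfile 6).comap g {x, y, z}, (cycleProfile 7).comap g {x, y, z}, x,
    isSWO_comap (isSWO_ofUtility _ _ _) (hmaps 6), ⟨0, Finset.mem_range.2 (by norm_num)⟩,
    Finset.card_eq_three.2 ⟨x, y, z, hxy, hxz, hyz, rfl⟩,
    isSWO_comap (isSWO_ofUtility _ _ _) (hmaps 7), ?_,
    addTopVoter_comap (hgx ▸ addTopVoter_cycleProfile) hx hg (hmaps 6), ?_⟩
  · rw [mem_cp_comap_iff hA hg hx, cp_cycleProfile_six]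
    exact Finset.mem_univ _
  · rw [mem_cp_comap_iff hA hg hx, hgx, cp_cycleProfile_seven]
    decide

end MayMinimax
end
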